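/- arXiv:2502.03164 — 7 statements merged into one kernel-verified Lean document; each statement's English description precedes it below -/
import Mathlib

section
/- Let A : X → Y and A' : X' → Y' be compact operators between Hilbert spaces over ℝ or ℂ, each admitting an infinite-rank singular value decomposition: A x = ∑'_{n∈ℕ} σ(n) ⟪φ(n), x⟫ ψ(n) and A' x = ∑'_{n∈ℕ} σ'(n) ⟪φ'(n), x⟫ ψ'(n). Assume there is a constant C > 0 with σ'(n) ≤ C σ(n) for all n. Then: (i) there exist a bounded linear operator O : Y → Y' satisfying ‖O y‖ = ‖y‖ for every y in the closure of the range of A, and a bounded linear operator S : X' → X, such that A' = O ∘ A ∘ S; and (ii) there exist a bounded linear operator T : Y → Y' and a bounded linear operator U : X' → X satisfying ‖U x‖ = ‖x‖ for every x in the orthogonal complement of the kernel of A', such that A' = T ∘ A ∘ U. -/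
/-!
Write `J_v : ℓ² → X` for the isometric synthesis map `f ↦ ∑ f n • v n` of an orthonormal
sequence `v`, `J_v†` for its adjoint `x ↦ (⟪v n, x⟫)ₙ`, and `D_c` for multiplication by a bounded
sequence `c` on `ℓ²`. An SVD says `A = J_ψ D_σ J_φ†`. Since `c = σ' / σ` is bounded by `C`,
`D_σ' = D_σ D_c`, and `J_v† J_v = 1` gives
`A' = (J_ψ' J_ψ†) A (J_φ D_c J_φ'†) = (J_ψ' D_c J_ψ†) A (J_φ J_φ'†)`.
Now `J_ψ' J_ψ†` is isometric on the closed range of `J_ψ`, which contains the range of `A`, and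
`J_φ J_φ'†` is isometric on the range of `J_φ'`, which is `(ker J_φ'†)ᗮ ⊇ (ker A')ᗮ`.
-/

open ContinuousLinearMap Filter
open scoped ENNReal lp

namespace lp

variable {ι 𝕜 : Type*} [RCLike 𝕜] {E : ι → Type*} [∀ i, NormedAddCommGroup (E i)]
  [∀ i, NormedSpace 𝕜 (E i)] {p : ℝ≥0∞}

theorem norm_infty_smul_apply_le (c : ℓ^∞(ι, 𝕜)) (f : lp E p) (i : ι) :
    ‖c i • f i‖ ≤ ‖((‖c‖ : 𝕜) • f) i‖ := by
  rw [lp.coeFn_smul, Pi.smul_apply, norm_smul, norm_smul, RCLike.norm_ofReal, abs_norm]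
  gcongr
  exact lp.norm_apply_le_norm ENNReal.top_ne_zero c i

variable [Fact (1 ≤ p)]

noncomputable def diagonal (c : ℓ^∞(ι, 𝕜)) : lp E p →L[𝕜] lp E p :=
  LinearMap.mkContinuous
    { toFun f := ⟨fun i => c i • f i, (lp.memℓp ((‖c‖ : 𝕜) • f)).mono' (norm_infty_smul_apply_le c f)⟩
      map_add' f g := lp.ext <| funext fun i => smul_add (c i) (f i) (g i)
      map_smul' a f := lp.ext <| funext fun i => smul_comm (c i) a (f i) }
    ‖c‖ fun f => by
      have hp : p ≠ 0 := (zero_lt_one.trans_le Fact.out).ne'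
      refine (lp.norm_mono hp (x := ⟨_, _⟩) (norm_infty_smul_apply_le c f)).trans_eq ?_
      rw [lp.norm_const_smul hp, RCLike.norm_ofReal, abs_norm]

@[simp]
theorem diagonal_apply (c : ℓ^∞(ι, 𝕜)) (f : lp E p) (i : ι) : diagonal c f i = c i • f i := rfl

theorem diagonal_mul (c d : ℓ^∞(ι, 𝕜)) :
    (diagonal (c * d) : lp E p →L[𝕜] lp E p) = diagonal c ∘L diagonal d := by
  ext f i
  simp [lp.infty_coeFn_mul, mul_smul]

end lp

namespace Orthonormal

variable {ι 𝕜 E : Type*} [RCLike 𝕜] [NormedAddCommGroup E] [InnerProductSpace 𝕜 E]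
  [CompleteSpace E] {v : ι → E} (hv : Orthonormal 𝕜 v)

noncomputable def synthesis : ℓ²(ι, 𝕜) →L[𝕜] E :=
  hv.orthogonalFamily.linearIsometry.toContinuousLinearMap

theorem synthesis_apply (f : ℓ²(ι, 𝕜)) : hv.synthesis f = ∑' i, f i • v i := by
  simp [synthesis, OrthogonalFamily.linearIsometry_apply]

theorem synthesis_single [DecidableEq ι] (i : ι) : hv.synthesis (lp.single 2 i 1) = v i := by
  simp [synthesis]

theorem norm_synthesis (f : ℓ²(ι, 𝕜)) : ‖hv.synthesis f‖ = ‖f‖ :=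
  hv.orthogonalFamily.linearIsometry.norm_map f

theorem isClosed_range_synthesis : IsClosed (Set.range hv.synthesis) :=
  hv.orthogonalFamily.linearIsometry.isometry.isUniformInducing.isComplete_range.isClosed

noncomputable def coeffs : E →L[𝕜] ℓ²(ι, 𝕜) := adjoint hv.synthesis

theorem coeffs_apply (x : E) (i : ι) : hv.coeffs x i = inner 𝕜 (v i) x := by
  classical
  rw [← hv.synthesis_single, coeffs, ← adjoint_inner_right, lp.inner_single_left]
  simp

theorem coeffs_synthesis (f : ℓ²(ι, 𝕜)) : hv.coeffs (hv.synthesis f) = f := by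
  classical
  ext i
  rw [coeffs_apply, ← hv.synthesis_single, synthesis, LinearIsometry.coe_toContinuousLinearMap,
    LinearIsometry.inner_map_map, lp.inner_single_left]
  simp

theorem orthogonal_ker_coeffs : hv.coeffs.kerᗮ = hv.synthesis.range := by
  have : CompleteSpace hv.synthesis.range := by
    refine IsComplete.completeSpace_coe ?_
    rw [LinearMap.coe_range, coe_coe]
    exact hv.isClosed_range_synthesis.isComplete
  rw [coeffs, ← orthogonal_range, Submodule.orthogonal_orthogonal]

theorem norm_coeffs_of_mem_range {x : E} (hx : x ∈ Set.range hv.synthesis) :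
    ‖hv.coeffs x‖ = ‖x‖ := by
  obtain ⟨f, rfl⟩ := hx
  rw [coeffs_synthesis, norm_synthesis]

theorem eq_synthesis_comp_diagonal_comp_coeffs {F : Type*} [NormedAddCommGroup F]
    [InnerProductSpace 𝕜 F] [CompleteSpace F] {w : ι → F} (hw : Orthonormal 𝕜 w)
    (T : E →L[𝕜] F) (s : ℓ^∞(ι, 𝕜)) (hT : ∀ x, T x = ∑' i, (s i * inner 𝕜 (v i) x) • w i) :
    T = hw.synthesis ∘L lp.diagonal s ∘L hv.coeffs := by
  ext x
  simp [hT, synthesis_apply, coeffs_apply]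

end Orthonormal

section DiagonalFactorization

variable {ι 𝕜 X Y X' Y' : Type*} [RCLike 𝕜]
  [NormedAddCommGroup X] [InnerProductSpace 𝕜 X] [CompleteSpace X]
  [NormedAddCommGroup Y] [InnerProductSpace 𝕜 Y] [CompleteSpace Y]
  [NormedAddCommGroup X'] [InnerProductSpace 𝕜 X'] [CompleteSpace X']
  [NormedAddCommGroup Y'] [InnerProductSpace 𝕜 Y'] [CompleteSpace Y']
  {φ : ι → X} {ψ : ι → Y} {φ' : ι → X'} {ψ' : ι → Y'}
  (hφ : Orthonormal 𝕜 φ) (hψ : Orthonormal 𝕜 ψ) (hφ' : Orthonormal 𝕜 φ') (hψ' : Orthonormal 𝕜 ψ')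
  {A : X →L[𝕜] Y} {A' : X' →L[𝕜] Y'} {s c : ℓ^∞(ι, 𝕜)}

theorem exists_factorization_normPreserving_on_closure_range
    (hA : A = hψ.synthesis ∘L lp.diagonal s ∘L hφ.coeffs)
    (hA' : A' = hψ'.synthesis ∘L lp.diagonal (s * c) ∘L hφ'.coeffs) :
    ∃ (O : Y →L[𝕜] Y') (S : X' →L[𝕜] X),
      (∀ y ∈ closure (Set.range A), ‖O y‖ = ‖y‖) ∧ A' = O ∘L (A ∘L S) := by
  refine ⟨hψ'.synthesis ∘L hψ.coeffs, hφ.synthesis ∘L lp.diagonal c ∘L hφ'.coeffs, ?_, ?_⟩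
  · intro y hy
    have hrange : Set.range A ⊆ Set.range hψ.synthesis := by
      rw [hA, coe_comp]
      exact Set.range_comp_subset_range _ _
    rw [comp_apply, hψ'.norm_synthesis,
      hψ.norm_coeffs_of_mem_range (closure_minimal hrange hψ.isClosed_range_synthesis hy)]
  · ext x
    rw [hA', hA, lp.diagonal_mul]
    simp [Orthonormal.coeffs_synthesis]

theorem exists_factorization_normPreserving_on_orthogonal_ker
    (hA : A = hψ.synthesis ∘L lp.diagonal s ∘L hφ.coeffs)
    (hA' : A' = hψ'.synthesis ∘L lp.diagonal (s * c) ∘L hφ'.coeffs) :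
    ∃ (T : Y →L[𝕜] Y') (U : X' →L[𝕜] X),
      (∀ x ∈ (LinearMap.ker (A' : X' →ₗ[𝕜] Y'))ᗮ, ‖U x‖ = ‖x‖) ∧ A' = T ∘L (A ∘L U) := by
  refine ⟨hψ'.synthesis ∘L lp.diagonal c ∘L hψ.coeffs, hφ.synthesis ∘L hφ'.coeffs, ?_, ?_⟩
  · intro x hx
    have hker : hφ'.coeffs.ker ≤ LinearMap.ker (A' : X' →ₗ[𝕜] Y') := by
      intro z hz
      rw [LinearMap.mem_ker, coe_coe] at hz ⊢
      simp [hA', hz]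
    have hx' := Submodule.orthogonal_le hker hx
    rw [Orthonormal.orthogonal_ker_coeffs] at hx'
    rw [comp_apply, hφ.norm_synthesis, hφ'.norm_coeffs_of_mem_range (by simpa using hx')]
  · ext x
    rw [hA', hA, mul_comm, lp.diagonal_mul]
    simp [Orthonormal.coeffs_synthesis]

end DiagonalFactorization

theorem svd_factorization_general
    {𝕜 X Y X' Y' : Type*} [RCLike 𝕜]
    [NormedAddCommGroup X] [InnerProductSpace 𝕜 X] [CompleteSpace X]
    [NormedAddCommGroup Y] [InnerProductSpace 𝕜 Y] [CompleteSpace Y]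
    [NormedAddCommGroup X'] [InnerProductSpace 𝕜 X'] [CompleteSpace X']
    [NormedAddCommGroup Y'] [InnerProductSpace 𝕜 Y'] [CompleteSpace Y']
    (A : X →L[𝕜] Y) (A' : X' →L[𝕜] Y')
    (σ σ' : ℕ → ℝ) (φ : ℕ → X) (ψ : ℕ → Y) (φ' : ℕ → X') (ψ' : ℕ → Y')
    (hσpos : ∀ n, 0 < σ n) (hσ0 : Tendsto σ atTop (nhds 0))
    (hσ'pos : ∀ n, 0 < σ' n)
    (hφ : Orthonormal 𝕜 φ) (hψ : Orthonormal 𝕜 ψ)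
    (hφ' : Orthonormal 𝕜 φ') (hψ' : Orthonormal 𝕜 ψ')
    (hArep : ∀ x : X, A x = ∑' n : ℕ, ((σ n : 𝕜) * (inner 𝕜 (φ n) x : 𝕜)) • ψ n)
    (hA'rep : ∀ x : X', A' x = ∑' n : ℕ, ((σ' n : 𝕜) * (inner 𝕜 (φ' n) x : 𝕜)) • ψ' n)
    (C : ℝ) (hCσ : ∀ n, σ' n ≤ C * σ n) :
    (∃ (O : Y →L[𝕜] Y') (S : X' →L[𝕜] X),
        (∀ y ∈ closure (Set.range ⇑A), ‖O y‖ = ‖y‖) ∧ A' = O ∘L (A ∘L S)) ∧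
    (∃ (T : Y →L[𝕜] Y') (U : X' →L[𝕜] X),
        (∀ x ∈ (LinearMap.ker (A' : X' →ₗ[𝕜] Y'))ᗮ, ‖U x‖ = ‖x‖) ∧ A' = T ∘L (A ∘L U)) := by
  let s : ℓ^∞(ℕ, 𝕜) := ⟨fun n => (σ n : 𝕜), memℓp_infty <| by
    simpa using hσ0.abs.bddAbove_range⟩
  let c : ℓ^∞(ℕ, 𝕜) := ⟨fun n => ((σ' n / σ n : ℝ) : 𝕜), memℓp_infty ⟨C, by
    rintro _ ⟨n, rfl⟩
    show ‖((σ' n / σ n : ℝ) : 𝕜)‖ ≤ C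
    rw [RCLike.norm_ofReal, abs_of_pos (div_pos (hσ'pos n) (hσpos n)), div_le_iff₀ (hσpos n)]
    exact hCσ n⟩⟩
  have hsc (n : ℕ) : (s * c) n = σ' n := by
    rw [lp.infty_coeFn_mul, Pi.mul_apply]
    show (σ n : 𝕜) * ((σ' n / σ n : ℝ) : 𝕜) = σ' n
    rw [← RCLike.ofReal_mul, mul_div_cancel₀ _ (hσpos n).ne']
  have hA := hφ.eq_synthesis_comp_diagonal_comp_coeffs hψ A s hArep
  have hA' := hφ'.eq_synthesis_comp_diagonal_comp_coeffs hψ' A' (s * c) (by simpa [hsc] using hA'rep)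
  exact ⟨exists_factorization_normPreserving_on_closure_range hφ hψ hφ' hψ' hA hA',
    exists_factorization_normPreserving_on_orthogonal_ker hφ hψ hφ' hψ' hA hA'⟩

/-- Lemma on SVD-based factorizations: if two compact operators between Hilbert spaces have
infinite-rank singular value decompositions whose singular values satisfy
`σ'(n) ≤ C σ(n)`, then `A' = O ∘ A ∘ S` with `O` isometric on the closure of the range of `A`,
and `A' = T ∘ A ∘ U` with `U` isometric on the orthogonal complement of the kernel of `A'`. -/
theorem svd_factorization
    {𝕜 X Y X' Y' : Type*} [RCLike 𝕜]
    [NormedAddCommGroup X] [InnerProductSpace 𝕜 X] [CompleteSpace X]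
    [NormedAddCommGroup Y] [InnerProductSpace 𝕜 Y] [CompleteSpace Y]
    [NormedAddCommGroup X'] [InnerProductSpace 𝕜 X'] [CompleteSpace X']
    [NormedAddCommGroup Y'] [InnerProductSpace 𝕜 Y'] [CompleteSpace Y']
    (A : X →L[𝕜] Y) (A' : X' →L[𝕜] Y')
    (hAcompact : IsCompactOperator ⇑A) (hA'compact : IsCompactOperator ⇑A')
    (σ σ' : ℕ → ℝ) (φ : ℕ → X) (ψ : ℕ → Y) (φ' : ℕ → X') (ψ' : ℕ → Y')
    (hσpos : ∀ n, 0 < σ n) (hσanti : Antitone σ) (hσ0 : Tendsto σ atTop (nhds 0))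
    (hσ'pos : ∀ n, 0 < σ' n) (hσ'anti : Antitone σ') (hσ'0 : Tendsto σ' atTop (nhds 0))
    (hφ : Orthonormal 𝕜 φ) (hψ : Orthonormal 𝕜 ψ)
    (hφ' : Orthonormal 𝕜 φ') (hψ' : Orthonormal 𝕜 ψ')
    (hArep : ∀ x : X, A x = ∑' n : ℕ, ((σ n : 𝕜) * (inner 𝕜 (φ n) x : 𝕜)) • ψ n)
    (hA'rep : ∀ x : X', A' x = ∑' n : ℕ, ((σ' n : 𝕜) * (inner 𝕜 (φ' n) x : 𝕜)) • ψ' n)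
    (C : ℝ) (hC : 0 < C) (hCσ : ∀ n, σ' n ≤ C * σ n) :
    (∃ (O : Y →L[𝕜] Y') (S : X' →L[𝕜] X),
        (∀ y ∈ closure (Set.range ⇑A), ‖O y‖ = ‖y‖) ∧ A' = O ∘L (A ∘L S)) ∧
    (∃ (T : Y →L[𝕜] Y') (U : X' →L[𝕜] X),
        (∀ x ∈ (LinearMap.ker (A' : X' →ₗ[𝕜] Y'))ᗮ, ‖U x‖ = ‖x‖) ∧ A' = T ∘L (A ∘L U)) :=
  svd_factorization_general A A' σ σ' φ ψ φ' ψ' hσpos hσ0 hσ'pos hφ hψ hφ' hψ' hArep hA'rep C hCσ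
end

section
/- Let X, X', Y be Hilbert spaces over ℝ or ℂ and let A : X → Y and A' : X' → Y be bounded linear operators with common codomain. Then the following are equivalent: (1) range(A') ⊆ range(A); (2) there exists C > 0 such that ‖A'* y‖ ≤ C ‖A* y‖ for all y ∈ Y, where A*, A'* are the Hilbert-space adjoints; (3) there exists a bounded linear operator S : X' → X with A' = A ∘ S. Moreover, there is exactly one bounded linear operator S : X' → X satisfying A' = A ∘ S together with range(S) ⊆ (ker A)^⊥, and this S satisfies ker(S) ⊆ ker(A'). -/
open ContinuousLinearMap

open scoped InnerProductSpace

/-! On `(ker A)ᗮ` the operator `A` is injective, so when `range A' ⊆ range A` every `A' x'` has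
exactly one preimage `S x'` in `(ker A)ᗮ`. This `S` is linear, and its graph is closed since
`(ker A)ᗮ` is closed, so it is bounded by the closed graph theorem. A factorisation `A' = A S`
gives `A'* = S* A*`, hence the adjoint bound. Conversely, under the bound `‖A'* y‖ ≤ C ‖A* y‖`
the functional `A* y ↦ ⟪x', A'* y⟫` is well defined and bounded on `range A*`; a Hahn–Banach
extension of it is represented by some `x`, and then `A x = A' x'`. -/

section

variable {𝕜 X : Type*} [RCLike 𝕜] [NormedAddCommGroup X] [InnerProductSpace 𝕜 X]

theorem LinearMap.injOn_orthogonal_ker {Y : Type*} [AddCommGroup Y] [Module 𝕜 Y]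
    (f : X →ₗ[𝕜] Y) : Set.InjOn f (LinearMap.ker f)ᗮ := fun x₁ h₁ x₂ h₂ h ↦ by
  have hker : x₁ - x₂ ∈ LinearMap.ker f := by simp [h]
  exact sub_eq_zero.mp <|
    Submodule.disjoint_def.mp (Submodule.orthogonal_disjoint _) _ hker (Submodule.sub_mem _ h₁ h₂)

theorem LinearMap.exists_strongDual_comp_eq_of_norm_le {E F : Type*} [NormedAddCommGroup E]
    [NormedSpace 𝕜 E] [AddCommGroup F] [Module 𝕜 F] (T : F →ₗ[𝕜] E) (h : F →ₗ[𝕜] 𝕜) (M : ℝ)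
    (hM : ∀ y, ‖h y‖ ≤ M * ‖T y‖) :
    ∃ g : StrongDual 𝕜 E, ∀ y, g (T y) = h y := by
  have hker : LinearMap.ker T ≤ LinearMap.ker h := fun y hy ↦
    norm_le_zero_iff.mp <| by simpa [LinearMap.mem_ker.mp hy] using hM y
  let g₀ : LinearMap.range T →ₗ[𝕜] 𝕜 :=
    (LinearMap.ker T).liftQ h hker ∘ₗ T.quotKerEquivRange.symm.toLinearMap
  have hg₀ : ∀ y, g₀ (T.rangeRestrict y) = h y := fun y ↦
    congrArg ((LinearMap.ker T).liftQ h hker) (T.quotKerEquivRange_symm_apply_image y ⟨y, rfl⟩)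
  have hbound : ∀ z, ‖g₀ z‖ ≤ M * ‖z‖ := fun z ↦ by
    obtain ⟨y, rfl⟩ := T.surjective_rangeRestrict z
    simpa [hg₀] using hM y
  obtain ⟨g, hg, -⟩ := exists_extension_norm_eq _ (g₀.mkContinuous M hbound)
  exact ⟨g, fun y ↦ (hg (T.rangeRestrict y)).trans (hg₀ y)⟩

namespace ContinuousLinearMap

variable {X' Y : Type*} [NormedAddCommGroup Y]

theorem range_subset_range_of_norm_adjoint_le [InnerProductSpace 𝕜 Y] [CompleteSpace X]
    [CompleteSpace Y] [NormedAddCommGroup X'] [InnerProductSpace 𝕜 X'] [CompleteSpace X']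
    (A : X →L[𝕜] Y) (A' : X' →L[𝕜] Y) {C : ℝ} (hC : ∀ y, ‖adjoint A' y‖ ≤ C * ‖adjoint A y‖) :
    Set.range A' ⊆ Set.range A := by
  rintro _ ⟨x', rfl⟩
  obtain ⟨g, hg⟩ := LinearMap.exists_strongDual_comp_eq_of_norm_le (adjoint A : Y →ₗ[𝕜] X)
    ((innerSL 𝕜 x').comp (adjoint A')).toLinearMap (C * ‖x'‖) fun y ↦ calc
      ‖⟪x', adjoint A' y⟫_𝕜‖ ≤ ‖x'‖ * ‖adjoint A' y‖ := norm_inner_le_norm _ _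
      _ ≤ ‖x'‖ * (C * ‖adjoint A y‖) := mul_le_mul_of_nonneg_left (hC y) (norm_nonneg _)
      _ = C * ‖x'‖ * ‖adjoint A y‖ := by ring
  refine ⟨(InnerProductSpace.toDual 𝕜 X).symm g, ext_inner_right 𝕜 fun y ↦ ?_⟩
  rw [← adjoint_inner_right, ← adjoint_inner_right, InnerProductSpace.toDual_symm_apply]
  exact hg y

theorem exists_linearMap_comp_eq_range_le_orthogonal_ker [NormedSpace 𝕜 Y] [CompleteSpace X]
    [AddCommGroup X'] [Module 𝕜 X'] (A : X →L[𝕜] Y) (A' : X' →ₗ[𝕜] Y)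
    (hr : LinearMap.range A' ≤ LinearMap.range (A : X →ₗ[𝕜] Y)) :
    ∃ S : X' →ₗ[𝕜] X, (A : X →ₗ[𝕜] Y) ∘ₗ S = A' ∧
      LinearMap.range S ≤ (LinearMap.ker (A : X →ₗ[𝕜] Y))ᗮ := by
  set K := LinearMap.ker (A : X →ₗ[𝕜] Y)
  have : CompleteSpace K := (isClosed_ker A).completeSpace_coe
  let B : Kᗮ →ₗ[𝕜] Y := (A : X →ₗ[𝕜] Y) ∘ₗ Kᗮ.subtype
  have hB : Function.Injective B := fun x₁ x₂ h ↦
    Subtype.ext ((A : X →ₗ[𝕜] Y).injOn_orthogonal_ker x₁.2 x₂.2 h)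
  have hrB : ∀ x', A' x' ∈ LinearMap.range B := fun x' ↦ by
    obtain ⟨x, hx⟩ := hr ⟨x', rfl⟩
    refine ⟨⟨x - K.starProjection x, K.sub_starProjection_mem_orthogonal x⟩, ?_⟩
    have hAx : A (K.starProjection x) = 0 := K.starProjection_apply_mem x
    simp [B, ← hx, hAx]
  refine ⟨Kᗮ.subtype ∘ₗ (LinearEquiv.ofInjective B hB).symm.toLinearMap ∘ₗ A'.codRestrict _ hrB,
    LinearMap.ext fun x' ↦ ?_, (LinearMap.range_comp_le_range _ _).trans (Kᗮ.range_subtype).le⟩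
  exact congrArg Subtype.val ((LinearEquiv.ofInjective B hB).apply_symm_apply _)

theorem continuous_of_comp_eq_of_range_le_orthogonal_ker [NormedSpace 𝕜 Y] [CompleteSpace X]
    [NormedAddCommGroup X'] [NormedSpace 𝕜 X'] [CompleteSpace X'] (A : X →L[𝕜] Y)
    (A' : X' →L[𝕜] Y) (S : X' →ₗ[𝕜] X) (hAS : (A : X →ₗ[𝕜] Y) ∘ₗ S = A')
    (hS : LinearMap.range S ≤ (LinearMap.ker (A : X →ₗ[𝕜] Y))ᗮ) : Continuous S := by
  refine S.continuous_of_seq_closed_graph fun u x y hu hSu ↦ ?_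
  have hy : y ∈ (LinearMap.ker (A : X →ₗ[𝕜] Y))ᗮ :=
    Submodule.isClosed_orthogonal _ |>.mem_of_tendsto hSu (.of_forall fun n ↦ hS ⟨u n, rfl⟩)
  have hAy : A y = A (S x) := by
    have hASx : ∀ x', A (S x') = A' x' := LinearMap.congr_fun hAS
    refine tendsto_nhds_unique ((A.continuous.tendsto y).comp hSu) ?_
    simpa only [Function.comp_def, hASx] using (A'.continuous.tendsto x).comp hu
  exact (A : X →ₗ[𝕜] Y).injOn_orthogonal_ker hy (hS ⟨x, rfl⟩) hAy

theorem exists_comp_eq_range_le_orthogonal_ker [NormedSpace 𝕜 Y] [CompleteSpace X]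
    [NormedAddCommGroup X'] [NormedSpace 𝕜 X'] [CompleteSpace X'] (A : X →L[𝕜] Y)
    (A' : X' →L[𝕜] Y) (hr : Set.range A' ⊆ Set.range A) :
    ∃ S : X' →L[𝕜] X, A' = A ∘L S ∧
      LinearMap.range (S : X' →ₗ[𝕜] X) ≤ (LinearMap.ker (A : X →ₗ[𝕜] Y))ᗮ := by
  obtain ⟨S, hAS, hS⟩ := exists_linearMap_comp_eq_range_le_orthogonal_ker A (A' : X' →ₗ[𝕜] Y)
    fun _ hy ↦ hr hy
  refine ⟨⟨S, continuous_of_comp_eq_of_range_le_orthogonal_ker A A' S hAS hS⟩, ?_, hS⟩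
  exact ContinuousLinearMap.coe_injective hAS.symm

theorem eq_of_comp_eq_of_range_le_orthogonal_ker [NormedSpace 𝕜 Y] [NormedAddCommGroup X']
    [NormedSpace 𝕜 X'] (A : X →L[𝕜] Y) {S T : X' →L[𝕜] X} (h : A ∘L S = A ∘L T)
    (hS : LinearMap.range (S : X' →ₗ[𝕜] X) ≤ (LinearMap.ker (A : X →ₗ[𝕜] Y))ᗮ)
    (hT : LinearMap.range (T : X' →ₗ[𝕜] X) ≤ (LinearMap.ker (A : X →ₗ[𝕜] Y))ᗮ) : S = T :=
  ext fun x' ↦ (A : X →ₗ[𝕜] Y).injOn_orthogonal_ker (hS ⟨x', rfl⟩) (hT ⟨x', rfl⟩)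
    (DFunLike.congr_fun h x')

theorem norm_adjoint_apply_le_of_eq_comp [InnerProductSpace 𝕜 Y] [CompleteSpace X]
    [CompleteSpace Y] [NormedAddCommGroup X'] [InnerProductSpace 𝕜 X'] [CompleteSpace X']
    {A : X →L[𝕜] Y} {A' : X' →L[𝕜] Y} {S : X' →L[𝕜] X} (hS : A' = A ∘L S) (y : Y) :
    ‖adjoint A' y‖ ≤ ‖S‖ * ‖adjoint A y‖ := by
  rw [hS, adjoint_comp, comp_apply, ← adjoint.norm_map S]
  exact le_opNorm _ _

end ContinuousLinearMap

end

/-- Douglas range inclusion theorem, together with uniqueness of the connecting operator `S`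
whose range lies in `(ker A)ᗮ`, which moreover satisfies `ker S ⊆ ker A'`. -/
theorem douglas_range_inclusion
    {𝕜 X X' Y : Type*} [RCLike 𝕜]
    [NormedAddCommGroup X] [InnerProductSpace 𝕜 X] [CompleteSpace X]
    [NormedAddCommGroup X'] [InnerProductSpace 𝕜 X'] [CompleteSpace X']
    [NormedAddCommGroup Y] [InnerProductSpace 𝕜 Y] [CompleteSpace Y]
    (A : X →L[𝕜] Y) (A' : X' →L[𝕜] Y) :
    ((Set.range ⇑A' ⊆ Set.range ⇑A) ↔
      (∃ C : ℝ, 0 < C ∧ ∀ y : Y,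
        ‖ContinuousLinearMap.adjoint A' y‖ ≤ C * ‖ContinuousLinearMap.adjoint A y‖)) ∧
    ((Set.range ⇑A' ⊆ Set.range ⇑A) ↔ (∃ S : X' →L[𝕜] X, A' = A ∘L S)) ∧
    (Set.range ⇑A' ⊆ Set.range ⇑A →
      (∃! S : X' →L[𝕜] X,
          A' = A ∘L S ∧ LinearMap.range (S : X' →ₗ[𝕜] X) ≤ (LinearMap.ker (A : X →ₗ[𝕜] Y))ᗮ) ∧
      (∀ S : X' →L[𝕜] X, A' = A ∘L S → LinearMap.range (S : X' →ₗ[𝕜] X) ≤ (LinearMap.ker (A : X →ₗ[𝕜] Y))ᗮ →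
          LinearMap.ker (S : X' →ₗ[𝕜] X) ≤ LinearMap.ker (A' : X' →ₗ[𝕜] Y))) := by
  have range_iff_factor : Set.range A' ⊆ Set.range A ↔ ∃ S : X' →L[𝕜] X, A' = A ∘L S :=
    ⟨fun hr ↦ (exists_comp_eq_range_le_orthogonal_ker A A' hr).imp fun _ ↦ And.left,
      fun ⟨S, hS⟩ ↦ hS ▸ Set.range_comp_subset_range S A⟩
  refine ⟨⟨fun hr ↦ ?_, fun ⟨_, _, hC⟩ ↦ range_subset_range_of_norm_adjoint_le A A' hC⟩,
    range_iff_factor, fun hr ↦ ⟨?_, fun S hS _ ↦ hS ▸ LinearMap.ker_le_ker_comp _ _⟩⟩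
  · obtain ⟨S, hS⟩ := range_iff_factor.mp hr
    refine ⟨‖S‖ + 1, by positivity, fun y ↦ (norm_adjoint_apply_le_of_eq_comp hS y).trans ?_⟩
    gcongr
    linarith
  · obtain ⟨S, hS, hSr⟩ := exists_comp_eq_range_le_orthogonal_ker A A' hr
    exact ⟨S, ⟨hS, hSr⟩, fun T ⟨hT, hTr⟩ ↦
      eq_of_comp_eq_of_range_le_orthogonal_ker A (hT ▸ hS) hTr hSr⟩
end

section
/- Let X, Y, X', Y' be Hilbert spaces over ℝ or ℂ and let A : X → Y and A' : X' → Y' be bounded linear operators (not necessarily compact). Then the following are equivalent: (1) there exist bounded linear operators T : Y → Y' and S : X' → X with A' = T ∘ A ∘ S; (2) there exist a partial isometry Q : Y → Y' (i.e., ‖Q y‖ = ‖y‖ for all y in the orthogonal complement of ker Q) and a bounded linear operator S : X' → X with A' = Q ∘ A ∘ S; (3) there exist a bounded linear operator T : Y → Y' and a partial isometry P : X' → X (i.e., ‖P x‖ = ‖x‖ for all x in the orthogonal complement of ker P) with A' = T ∘ A ∘ P. -/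
/-!
Write `K = A ∘ S`, so that `A' = T ∘ K` and `‖A' x‖ ≤ ‖T‖ ‖K x‖`. Both operators can be replaced by
self-adjoint operators `|K|`, `|A'|` with the same pointwise norms (square roots of `K† K` and
`A'† A'`, obtained from the power series of `1 - √(1 - z)`, whose coefficients are given by the
Catalan numbers). Douglas' factorisation gives `|A'| = E |K|`, hence `|A'| = |K| E†` by
self-adjointness, so `‖K (E† x)‖ = ‖A' x‖`; factoring `A'` through `K ∘ E†` once more yields an
operator that is isometric on the closure of the range of `K ∘ E†` and vanishes on its orthogonal
complement, i.e. a partial isometry. The third ordering follows by applying this to adjoints, as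
adjoints of partial isometries are partial isometries.
-/

open Finset

-- The coefficients of `1 - √(1 - z) = ∑ₙ 2 Cₙ zⁿ⁺¹ / 4ⁿ⁺¹`, `Cₙ` the Catalan numbers.
noncomputable def oneSubSqrtCoeff : ℕ → ℝ
  | 0 => 0
  | n + 1 => 2 * catalan n / 4 ^ (n + 1)

lemma oneSubSqrtCoeff_nonneg (n : ℕ) : 0 ≤ oneSubSqrtCoeff n := by
  cases n <;> unfold oneSubSqrtCoeff <;> positivity

lemma two_mul_catalan_add_centralBinom_succ (n : ℕ) :
    2 * catalan n + (n + 1).centralBinom = 4 * n.centralBinom := by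
  have h₁ := succ_mul_catalan_eq_centralBinom n
  have h₂ := Nat.succ_mul_centralBinom_succ n
  apply Nat.eq_of_mul_eq_mul_left (by omega : 0 < n + 1)
  linear_combination 2 * h₁ + h₂

lemma sum_range_succ_oneSubSqrtCoeff (n : ℕ) :
    ∑ k ∈ range (n + 1), oneSubSqrtCoeff k = 1 - n.centralBinom / 4 ^ n := by
  induction n with
  | zero => simp [oneSubSqrtCoeff]
  | succ n ih =>
    have h : (2 * catalan n + (n + 1).centralBinom : ℝ) = 4 * n.centralBinom := by
      exact_mod_cast two_mul_catalan_add_centralBinom_succ n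
    rw [sum_range_succ, ih, oneSubSqrtCoeff]
    field_simp
    linear_combination (4 : ℝ) ^ n * h

lemma summable_oneSubSqrtCoeff : Summable oneSubSqrtCoeff := by
  refine summable_of_sum_range_le (c := 1) oneSubSqrtCoeff_nonneg fun n => ?_
  cases n with
  | zero => simp
  | succ n =>
    rw [sum_range_succ_oneSubSqrtCoeff]
    linarith [show (0 : ℝ) ≤ n.centralBinom / 4 ^ n by positivity]

-- `f(z)² = 2 f(z) - z` for `f(z) = 1 - √(1 - z)`.
lemma sum_antidiagonal_oneSubSqrtCoeff_mul (n : ℕ) :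
    ∑ ij ∈ antidiagonal n, oneSubSqrtCoeff ij.1 * oneSubSqrtCoeff ij.2 =
      2 * oneSubSqrtCoeff n - if n = 1 then 1 else 0 := by
  match n with
  | 0 => simp [oneSubSqrtCoeff]
  | 1 => norm_num [Nat.sum_antidiagonal_succ, oneSubSqrtCoeff]
  | m + 2 =>
    have hterm : ∀ ij ∈ antidiagonal m, oneSubSqrtCoeff (ij.1 + 1) * oneSubSqrtCoeff (ij.2 + 1)
        = 4 / 4 ^ (m + 2) * (catalan ij.1 * catalan ij.2 : ℝ) := by
      rintro ⟨i, j⟩ hij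
      rw [HasAntidiagonal.mem_antidiagonal] at hij
      subst hij
      simp only [oneSubSqrtCoeff]
      field_simp
      ring
    rw [Nat.sum_antidiagonal_succ, Nat.sum_antidiagonal_succ', sum_congr rfl hterm, ← mul_sum]
    simp only [oneSubSqrtCoeff, catalan_succ' m]
    push_cast
    ring

section BanachAlgebra

variable (𝕜 : Type*) {A : Type*} [RCLike 𝕜] [NormedRing A] [NormedAlgebra 𝕜 A]

noncomputable def sqrtOneSub (b : A) : A :=
  1 - ∑' n, (oneSubSqrtCoeff n : 𝕜) • b ^ n

variable {𝕜}

lemma summable_norm_oneSubSqrtCoeff_smul_pow {b : A} (hb : ‖b‖ ≤ 1) :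
    Summable fun n => ‖(oneSubSqrtCoeff n : 𝕜) • b ^ n‖ := by
  refine summable_oneSubSqrtCoeff.of_nonneg_of_le (fun _ => norm_nonneg _) fun n => ?_
  rw [norm_smul, RCLike.norm_ofReal, abs_of_nonneg (oneSubSqrtCoeff_nonneg n)]
  cases n with
  | zero => simp [oneSubSqrtCoeff]
  | succ n =>
    exact mul_le_of_le_one_right (oneSubSqrtCoeff_nonneg _)
      ((norm_pow_le' b n.succ_pos).trans (pow_le_one₀ (norm_nonneg b) hb))

lemma sqrtOneSub_mul_self [CompleteSpace A] {b : A} (hb : ‖b‖ ≤ 1) :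
    sqrtOneSub 𝕜 b * sqrtOneSub 𝕜 b = 1 - b := by
  set s := ∑' n, (oneSubSqrtCoeff n : 𝕜) • b ^ n
  have hsum := summable_norm_oneSubSqrtCoeff_smul_pow (𝕜 := 𝕜) hb
  have hterm : ∀ n, ∑ ij ∈ antidiagonal n,
      (oneSubSqrtCoeff ij.1 : 𝕜) • b ^ ij.1 * (oneSubSqrtCoeff ij.2 : 𝕜) • b ^ ij.2 =
        (2 : 𝕜) • (oneSubSqrtCoeff n : 𝕜) • b ^ n - if n = 1 then b else 0 := by
    intro n
    have hpow : ∀ ij ∈ antidiagonal n,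
        (oneSubSqrtCoeff ij.1 : 𝕜) • b ^ ij.1 * (oneSubSqrtCoeff ij.2 : 𝕜) • b ^ ij.2 =
          ((oneSubSqrtCoeff ij.1 * oneSubSqrtCoeff ij.2 : ℝ) : 𝕜) • b ^ n := by
      rintro ⟨i, j⟩ hij
      rw [HasAntidiagonal.mem_antidiagonal] at hij
      rw [smul_mul_smul_comm, ← pow_add, hij, RCLike.ofReal_mul]
    rw [sum_congr rfl hpow, ← sum_smul, ← RCLike.ofReal_sum, sum_antidiagonal_oneSubSqrtCoeff_mul,
      RCLike.ofReal_sub, RCLike.ofReal_mul, RCLike.ofReal_ofNat, sub_smul, smul_smul]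
    split_ifs with h <;> simp [h]
  have hsq : s * s = (2 : 𝕜) • s - b := by
    rw [tsum_mul_tsum_eq_tsum_sum_antidiagonal_of_summable_norm hsum hsum, tsum_congr hterm,
      (hsum.of_norm.const_smul (2 : 𝕜)).tsum_sub (summable_of_ne_finset_zero (s := {1}) _),
      hsum.of_norm.tsum_const_smul, tsum_ite_eq]
    exact fun n hn => if_neg (by simpa using hn)
  change (1 - s) * (1 - s) = 1 - b
  rw [show (1 - s) * (1 - s) = 1 - (s + s) + s * s by noncomm_ring, hsq, two_smul]
  abel

lemma IsSelfAdjoint.sqrtOneSub [StarRing A] [StarModule 𝕜 A] [ContinuousStar A] {b : A}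
    (hb : IsSelfAdjoint b) : IsSelfAdjoint (sqrtOneSub 𝕜 b) := by
  refine (IsSelfAdjoint.one A).sub ?_
  rw [IsSelfAdjoint, tsum_star]
  refine tsum_congr fun n => ?_
  have hc : IsSelfAdjoint (oneSubSqrtCoeff n : 𝕜) := RCLike.conj_ofReal _
  exact (hc.smul (hb.pow n)).star_eq

end BanachAlgebra

namespace ContinuousLinearMap

open scoped InnerProduct

section SquareRoot

variable {𝕜 W Z : Type*} [RCLike 𝕜]
  [NormedAddCommGroup W] [InnerProductSpace 𝕜 W] [CompleteSpace W]
  [NormedAddCommGroup Z] [InnerProductSpace 𝕜 Z] [CompleteSpace Z]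

lemma norm_apply_eq_of_adjoint_comp_self_eq {Z' : Type*} [NormedAddCommGroup Z']
    [InnerProductSpace 𝕜 Z'] [CompleteSpace Z'] {H : W →L[𝕜] Z'} {K : W →L[𝕜] Z}
    (h : H† ∘L H = K† ∘L K) (x : W) : ‖H x‖ = ‖K x‖ := by
  have hsq := apply_norm_sq_eq_inner_adjoint_left H x
  rw [h, ← apply_norm_sq_eq_inner_adjoint_left] at hsq
  exact (sq_eq_sq₀ (norm_nonneg _) (norm_nonneg _)).mp hsq

lemma norm_one_sub_adjoint_comp_self_le_one {K : W →L[𝕜] Z} (hK : ‖K‖ ≤ 1) :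
    ‖1 - K† ∘L K‖ ≤ 1 := by
  refine opNorm_le_bound _ zero_le_one fun x => ?_
  have hK' : ‖K†‖ ≤ 1 := by rwa [LinearIsometryEquiv.norm_map]
  have hKK : ‖(K†) (K x)‖ ≤ ‖K x‖ := by simpa using (K†).le_of_opNorm_le hK' (K x)
  have hexp : ‖x - (K†) (K x)‖ ^ 2 = ‖x‖ ^ 2 - 2 * ‖K x‖ ^ 2 + ‖(K†) (K x)‖ ^ 2 := by
    rw [@norm_sub_sq 𝕜, adjoint_inner_right, inner_self_eq_norm_sq]
  rw [one_mul, sub_apply, one_apply_eq_self, comp_apply]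
  refine (pow_le_pow_iff_left₀ (norm_nonneg _) (norm_nonneg _) two_ne_zero).mp ?_
  nlinarith [norm_nonneg ((K†) (K x))]

lemma exists_isSelfAdjoint_norm_apply_eq_of_norm_le_one {K : W →L[𝕜] Z} (hK : ‖K‖ ≤ 1) :
    ∃ H : W →L[𝕜] W, IsSelfAdjoint H ∧ ∀ x, ‖H x‖ = ‖K x‖ := by
  have hB : IsSelfAdjoint (1 - K† ∘L K) := by
    refine (IsSelfAdjoint.one _).sub ?_
    rw [isSelfAdjoint_iff', adjoint_comp, adjoint_adjoint]
  set H := sqrtOneSub 𝕜 (1 - K† ∘L K)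
  have hH : IsSelfAdjoint H := hB.sqrtOneSub
  have hHH : H† ∘L H = K† ∘L K := by
    rw [hH.adjoint_eq, ← mul_def, sqrtOneSub_mul_self (norm_one_sub_adjoint_comp_self_le_one hK),
      sub_sub_cancel]
  exact ⟨H, hH, norm_apply_eq_of_adjoint_comp_self_eq hHH⟩

lemma exists_isSelfAdjoint_norm_apply_eq (K : W →L[𝕜] Z) :
    ∃ H : W →L[𝕜] W, IsSelfAdjoint H ∧ ∀ x, ‖H x‖ = ‖K x‖ := by
  set c : ℝ := ‖K‖ + 1
  have hc : 0 < c := by positivity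
  have hK : ‖(c⁻¹ : 𝕜) • K‖ ≤ 1 := by
    rw [norm_smul, norm_inv, RCLike.norm_ofReal, abs_of_pos hc]
    exact inv_mul_le_one_of_le₀ (by linarith) hc.le
  obtain ⟨H, hH, hHK⟩ := exists_isSelfAdjoint_norm_apply_eq_of_norm_le_one hK
  have hc' : IsSelfAdjoint (c : 𝕜) := RCLike.conj_ofReal c
  refine ⟨(c : 𝕜) • H, hc'.smul hH, fun x => ?_⟩
  rw [smul_apply, norm_smul, hHK, smul_apply, norm_smul, ← mul_assoc, ← norm_mul,
    mul_inv_cancel₀ (RCLike.ofReal_ne_zero.mpr hc.ne'), norm_one, one_mul]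

end SquareRoot

section PartialIsometry

variable {𝕜 W Y₁ Y₂ : Type*} [RCLike 𝕜]
  [NormedAddCommGroup W] [InnerProductSpace 𝕜 W]
  [NormedAddCommGroup Y₁] [InnerProductSpace 𝕜 Y₁] [NormedAddCommGroup Y₂] [InnerProductSpace 𝕜 Y₂]

def IsPartialIsometry (Q : Y₁ →L[𝕜] Y₂) : Prop :=
  ∀ y ∈ (LinearMap.ker (Q : Y₁ →ₗ[𝕜] Y₂))ᗮ, ‖Q y‖ = ‖y‖

lemma isPartialIsometry_comp_orthogonalProjectionOnto {M : Submodule 𝕜 Y₁}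
    [M.HasOrthogonalProjection] {g : M →L[𝕜] Y₂} (hg : ∀ m, ‖g m‖ = ‖m‖) :
    IsPartialIsometry (g ∘L M.orthogonalProjectionOnto) := by
  intro y hy
  have hker : Mᗮ ≤ LinearMap.ker ((g ∘L M.orthogonalProjectionOnto : Y₁ →L[𝕜] Y₂) : Y₁ →ₗ[𝕜] Y₂) :=
    fun z hz => by simp [Submodule.orthogonalProjectionOnto_eq_zero_iff.mpr hz]
  have hyM : y ∈ M := M.orthogonal_orthogonal ▸ Submodule.orthogonal_le hker hy
  rw [comp_apply, hg, M.orthogonalProjectionOnto_mem_subspace_eq_self ⟨y, hyM⟩]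
  rfl

variable [CompleteSpace Y₁] [CompleteSpace Y₂]

lemma adjoint_apply_mem_orthogonal_ker (Q : Y₁ →L[𝕜] Y₂) (z : Y₂) :
    (Q†) z ∈ (LinearMap.ker (Q : Y₁ →ₗ[𝕜] Y₂))ᗮ := by
  rw [orthogonal_ker]
  exact Submodule.le_topologicalClosure _ ⟨z, rfl⟩

lemma IsPartialIsometry.adjoint_apply_apply {Q : Y₁ →L[𝕜] Y₂} (hQ : IsPartialIsometry Q) {y : Y₁}
    (hy : y ∈ (LinearMap.ker (Q : Y₁ →ₗ[𝕜] Y₂))ᗮ) : (Q†) (Q y) = y := by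
  set N := (LinearMap.ker (Q : Y₁ →ₗ[𝕜] Y₂))ᗮ
  have hiso : (Q ∘L N.subtypeL)† ∘L (Q ∘L N.subtypeL) = 1 :=
    (norm_map_iff_adjoint_comp_self _).mp fun v => hQ v v.2
  have hproj := congr($hiso ⟨y, hy⟩)
  rw [adjoint_comp, N.adjoint_subtypeL] at hproj
  calc (Q†) (Q y) = N.orthogonalProjectionOnto ((Q†) (Q y)) :=
        congrArg Subtype.val (N.orthogonalProjectionOnto_mem_subspace_eq_self
          ⟨_, adjoint_apply_mem_orthogonal_ker Q (Q y)⟩).symm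
    _ = y := congrArg Subtype.val hproj

lemma IsPartialIsometry.comp_adjoint_comp_self {Q : Y₁ →L[𝕜] Y₂} (hQ : IsPartialIsometry Q) :
    Q ∘L Q† ∘L Q = Q := by
  ext y
  set N := (LinearMap.ker (Q : Y₁ →ₗ[𝕜] Y₂))ᗮ
  have hker : y - N.starProjection y ∈ LinearMap.ker (Q : Y₁ →ₗ[𝕜] Y₂) := by
    simpa only [N, Submodule.orthogonal_orthogonal] using N.sub_starProjection_mem_orthogonal y
  have hQy : Q y = Q (N.starProjection y) := by
    rwa [LinearMap.mem_ker, coe_coe, map_sub, sub_eq_zero] at hker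
  rw [comp_apply, comp_apply, hQy, hQ.adjoint_apply_apply (N.starProjection_apply_mem y)]

lemma isPartialIsometry_of_comp_adjoint_comp_self_eq {Q : Y₁ →L[𝕜] Y₂}
    (h : Q ∘L Q† ∘L Q = Q) : IsPartialIsometry Q := by
  intro y hy
  have hfix : (Q†) (Q y) = y := by
    have h₁ : (Q†) (Q y) - y ∈ LinearMap.ker (Q : Y₁ →ₗ[𝕜] Y₂) := by
      simpa [sub_eq_zero] using congr($h y)
    have h₂ : (Q†) (Q y) - y ∈ (LinearMap.ker (Q : Y₁ →ₗ[𝕜] Y₂))ᗮ :=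
      sub_mem (adjoint_apply_mem_orthogonal_ker Q _) hy
    simpa [sub_eq_zero] using (Submodule.inf_orthogonal_eq_bot _).le ⟨h₁, h₂⟩
  have hsq := apply_norm_sq_eq_inner_adjoint_left Q y
  rw [comp_apply, hfix, inner_self_eq_norm_sq] at hsq
  exact (sq_eq_sq₀ (norm_nonneg _) (norm_nonneg _)).mp hsq

lemma IsPartialIsometry.adjoint {Q : Y₁ →L[𝕜] Y₂} (hQ : IsPartialIsometry Q) :
    IsPartialIsometry (Q†) := by
  refine isPartialIsometry_of_comp_adjoint_comp_self_eq ?_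
  simpa only [adjoint_comp, adjoint_adjoint, comp_assoc] using congr(($hQ.comp_adjoint_comp_self)†)

theorem exists_comp_eq_of_norm_apply_le (U : W →L[𝕜] Y₁) (V : W →L[𝕜] Y₂) (c : ℝ)
    (h : ∀ x, ‖V x‖ ≤ c * ‖U x‖) :
    ∃ R : Y₁ →L[𝕜] Y₂, R ∘L U = V ∧ ((∀ x, ‖V x‖ = ‖U x‖) → IsPartialIsometry R) := by
  set M := (LinearMap.range (U : W →ₗ[𝕜] Y₁)).topologicalClosure
  set e : W →ₗ[𝕜] M := (U : W →ₗ[𝕜] Y₁).codRestrict M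
    fun x => Submodule.le_topologicalClosure _ ⟨x, rfl⟩
  have he : DenseRange e := by
    rw [DenseRange, Subtype.dense_iff, ← Set.range_comp]
    exact (Submodule.topologicalClosure_coe _).le
  set g := (V : W →ₗ[𝕜] Y₂).extendOfNorm e
  have hge : ∀ x, g (e x) = V x := LinearMap.extendOfNorm_eq he ⟨c, h⟩
  refine ⟨g ∘L M.orthogonalProjectionOnto, ?_, fun hVU => ?_⟩
  · ext x
    exact (congrArg g (M.orthogonalProjectionOnto_mem_subspace_eq_self (e x))).trans (hge x)
  · refine isPartialIsometry_comp_orthogonalProjectionOnto fun m => ?_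
    refine he.induction_on m (isClosed_eq (by fun_prop) (by fun_prop)) fun x => ?_
    rw [hge, hVU]
    rfl

end PartialIsometry

section Ordering

variable {𝕜 X X' Y Y' : Type*} [RCLike 𝕜]
  [NormedAddCommGroup X] [InnerProductSpace 𝕜 X] [CompleteSpace X]
  [NormedAddCommGroup X'] [InnerProductSpace 𝕜 X'] [CompleteSpace X']
  [NormedAddCommGroup Y] [InnerProductSpace 𝕜 Y] [CompleteSpace Y]
  [NormedAddCommGroup Y'] [InnerProductSpace 𝕜 Y'] [CompleteSpace Y']

theorem exists_isPartialIsometry_left_of_eq_comp {K : X →L[𝕜] Y} {A' : X →L[𝕜] Y'}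
    {T : Y →L[𝕜] Y'} (h : A' = T ∘L K) :
    ∃ (Q : Y →L[𝕜] Y') (D : X →L[𝕜] X), IsPartialIsometry Q ∧ A' = Q ∘L K ∘L D := by
  obtain ⟨H, hH, hHK⟩ := exists_isSelfAdjoint_norm_apply_eq K
  obtain ⟨L, hL, hLA⟩ := exists_isSelfAdjoint_norm_apply_eq A'
  obtain ⟨E, hEH, -⟩ := exists_comp_eq_of_norm_apply_le H L ‖T‖ fun x => by
    rw [hLA, hHK, h]
    exact T.le_opNorm (K x)
  have hHE : H ∘L E† = L := by
    simpa only [adjoint_comp, hH.adjoint_eq, hL.adjoint_eq] using congr(($hEH)†)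
  have hKE : ∀ x, ‖A' x‖ = ‖(K ∘L E†) x‖ := fun x => by
    rw [← hLA, ← hHE, comp_apply, comp_apply, hHK]
  obtain ⟨Q, hQ, hQiso⟩ :=
    exists_comp_eq_of_norm_apply_le (K ∘L E†) A' 1 fun x => (hKE x).trans_le (one_mul _).ge
  exact ⟨Q, E†, hQiso hKE, hQ.symm⟩

theorem exists_isPartialIsometry_right_of_eq_comp {K : X →L[𝕜] Y} {A' : X' →L[𝕜] Y}
    {S : X' →L[𝕜] X} (h : A' = K ∘L S) :
    ∃ (D : Y →L[𝕜] Y) (P : X' →L[𝕜] X), IsPartialIsometry P ∧ A' = D ∘L K ∘L P := by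
  obtain ⟨Q, D, hQ, hA⟩ :=
    exists_isPartialIsometry_left_of_eq_comp (K := K†) (A' := A'†) (T := S†)
      (by rw [h, adjoint_comp])
  refine ⟨D†, Q†, hQ.adjoint, ?_⟩
  simpa only [adjoint_comp, adjoint_adjoint, comp_assoc] using congr(($hA)†)

end Ordering

end ContinuousLinearMap

open ContinuousLinearMap

/-- Theorem 17 (non-compact case): for bounded operators between Hilbert spaces the orderings
`≤_{B,B}`, `≤_{PO,B}` and `≤_{B,PO}` are equivalent. -/
theorem orderings_equivalent_noncompact
    {𝕜 X Y X' Y' : Type*} [RCLike 𝕜]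
    [NormedAddCommGroup X] [InnerProductSpace 𝕜 X] [CompleteSpace X]
    [NormedAddCommGroup Y] [InnerProductSpace 𝕜 Y] [CompleteSpace Y]
    [NormedAddCommGroup X'] [InnerProductSpace 𝕜 X'] [CompleteSpace X']
    [NormedAddCommGroup Y'] [InnerProductSpace 𝕜 Y'] [CompleteSpace Y']
    (A : X →L[𝕜] Y) (A' : X' →L[𝕜] Y') :
    List.TFAE
      [ (∃ (T : Y →L[𝕜] Y') (S : X' →L[𝕜] X), A' = T ∘L (A ∘L S)),
        (∃ (Q : Y →L[𝕜] Y') (S : X' →L[𝕜] X),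
          (∀ y ∈ (LinearMap.ker (Q : Y →ₗ[𝕜] Y'))ᗮ, ‖Q y‖ = ‖y‖) ∧ A' = Q ∘L (A ∘L S)),
        (∃ (T : Y →L[𝕜] Y') (P : X' →L[𝕜] X),
          (∀ x ∈ (LinearMap.ker (P : X' →ₗ[𝕜] X))ᗮ, ‖P x‖ = ‖x‖) ∧ A' = T ∘L (A ∘L P)) ] := by
  tfae_have 1 → 2 := fun ⟨T, S, h⟩ => by
    obtain ⟨Q, D, hQ, hA⟩ := exists_isPartialIsometry_left_of_eq_comp h
    exact ⟨Q, S ∘L D, hQ, hA⟩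
  tfae_have 2 → 1 := fun ⟨Q, S, _, h⟩ => ⟨Q, S, h⟩
  tfae_have 1 → 3 := fun ⟨T, S, h⟩ => by
    obtain ⟨D, P, hP, hA⟩ := exists_isPartialIsometry_right_of_eq_comp (K := T ∘L A) h
    exact ⟨D ∘L T, P, hP, hA⟩
  tfae_have 3 → 1 := fun ⟨T, P, _, h⟩ => ⟨T, P, h⟩
  tfae_finish
end

section
/- Let X, Y, X', Y' be Hilbert spaces over ℝ or ℂ and let A : X → Y and A' : X' → Y' be bounded linear operators, and suppose A' = T ∘ A ∘ S for bounded linear operators T : Y → Y' and S : X' → X. (a) If T is injective on the closure of the range of A (i.e., y in the closure of range(A) and T y = 0 imply y = 0), then there exist a bounded linear operator O : Y → Y' with ‖O y‖ = ‖y‖ for every y in the closure of the range of A, and a bounded linear operator S' : X' → X, such that A' = O ∘ A ∘ S'. (b) If the range of S is dense in the orthogonal complement of the kernel of A, then there exist a bounded linear operator T' : Y → Y' and a bounded linear operator U : X' → X with ‖U x‖ = ‖x‖ for every x in the orthogonal complement of the kernel of A', such that A' = T' ∘ A ∘ U. -/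
/-!
For (a), let `R = |A†|` and `Q = |T R|`, i.e. self-adjoint square roots of `A A†` and
`(T R)† (T R)`. Douglas' lemma (a domination `‖F y‖ ≤ c ‖C y‖` factors `F` through `C`) gives
`A = R W₁` from `‖A† y‖ = ‖R y‖`, `Q = A W₂` from `‖Q y‖ = ‖T R y‖ ≤ ‖T‖ ‖A† y‖`, and
`T R = O Q` with `O` a contraction that is isometric on the closure of the range of `Q`. Since `T`
is injective on the closure of the range of `A`, which contains the range of `R`, the kernels of
`Q` and `A†` agree, so that closure contains the range of `A`; and
`T A = T R W₁ = O Q W₁ = O A W₂ W₁`.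

Part (b) is (a) applied to the adjoint factorization `A'† = S† A† T†`: density of the range of
`S` in `(ker A)ᗮ`, the closure of the range of `A†`, makes `S†` injective there, and the adjoint
of a contraction is isometric on the image of the set where the contraction is isometric.

A positive `P` is scaled so that `E = 1 - P / c` satisfies `0 ≤ E ≤ 1`; then `√(P / c) = 1 - L`
for the strong limit `L` of the Riesz–Nagy iterates `L ↦ (E + L²) / 2` started at `0`. These are
polynomials in `E` with nonnegative coefficients, hence positive, increasing and bounded, so
Vigier's theorem gives the limit.
-/

open ContinuousLinearMap InnerProduct InnerProductSpace Filter Topology RCLike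

namespace Polynomial

theorem coeff_mul_nonneg {R : Type*} [Semiring R] [PartialOrder R] [IsOrderedRing R] {p q : R[X]}
    (hp : ∀ i, 0 ≤ p.coeff i) (hq : ∀ i, 0 ≤ q.coeff i) (i : ℕ) : 0 ≤ (p * q).coeff i := by
  rw [coeff_mul]
  exact Finset.sum_nonneg fun _ _ => mul_nonneg (hp _) (hq _)

-- These increase to `1 - √(1 - X)` on `[0, 1]`, the fixed point of `q ↦ (X + q²) / 2`.
noncomputable def sqrtApprox : ℕ → ℝ[X]
  | 0 => 0
  | n + 1 => C 2⁻¹ * (X + sqrtApprox n ^ 2)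

theorem sqrtApprox_coeff_nonneg (n i : ℕ) : 0 ≤ (sqrtApprox n).coeff i := by
  induction n generalizing i with
  | zero => simp [sqrtApprox]
  | succ n ih =>
    rw [sqrtApprox, coeff_C_mul, coeff_add, pow_two]
    have := coeff_mul_nonneg ih ih i
    have : 0 ≤ (X : ℝ[X]).coeff i := by rw [coeff_X]; split_ifs <;> norm_num
    positivity

theorem sqrtApprox_succ_sub_coeff_nonneg (n i : ℕ) :
    0 ≤ (sqrtApprox (n + 1) - sqrtApprox n).coeff i := by
  induction n generalizing i with
  | zero =>
    simp only [sqrtApprox, coeff_sub, coeff_C_mul, coeff_add, coeff_X]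
    split_ifs <;> norm_num
  | succ n ih =>
    have h : sqrtApprox (n + 2) - sqrtApprox (n + 1) =
        C 2⁻¹ * ((sqrtApprox (n + 1) + sqrtApprox n) * (sqrtApprox (n + 1) - sqrtApprox n)) := by
      simp only [sqrtApprox]
      ring
    rw [h, coeff_C_mul]
    have := coeff_mul_nonneg (fun j => by
      rw [coeff_add]
      exact add_nonneg (sqrtApprox_coeff_nonneg (n + 1) j) (sqrtApprox_coeff_nonneg n j)) ih i
    positivity

theorem sqrtApprox_eval_one_le (n : ℕ) : (sqrtApprox n).eval 1 ≤ 1 := by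
  suffices 0 ≤ (sqrtApprox n).eval 1 ∧ (sqrtApprox n).eval 1 ≤ 1 from this.2
  induction n with
  | zero => simp [sqrtApprox]
  | succ n ih =>
    simp only [sqrtApprox, eval_mul, eval_C, eval_add, eval_X, eval_pow]
    constructor <;> nlinarith [ih.1, ih.2]

end Polynomial

namespace ContinuousLinearMap

section Positive

open Polynomial

variable {𝕜 Y : Type*} [RCLike 𝕜] [NormedAddCommGroup Y] [InnerProductSpace 𝕜 Y]

-- Expand `0 ≤ re ⟪D (x - t • D x), x - t • D x⟫` with `t = ‖D‖⁻¹`.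
theorem IsPositive.norm_apply_sq_le {D : Y →L[𝕜] Y} (hD : D.IsPositive) (x : Y) :
    ‖D x‖ ^ 2 ≤ ‖D‖ * re ⟪D x, x⟫_𝕜 := by
  rcases (norm_nonneg D).eq_or_lt with hD0 | hD0
  · simp [norm_eq_zero.mp hD0.symm]
  set t : ℝ := ‖D‖⁻¹
  have ht : t * ‖D‖ = 1 := inv_mul_cancel₀ hD0.ne'
  have hDDx : t ^ 2 * re ⟪D (D x), D x⟫_𝕜 ≤ t * ‖D x‖ ^ 2 := by
    calc t ^ 2 * re ⟪D (D x), D x⟫_𝕜 ≤ t ^ 2 * (‖D‖ * ‖D x‖ * ‖D x‖) := by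
          gcongr
          exact (re_le_norm _).trans ((norm_inner_le_norm _ _).trans
            (by gcongr; exact D.le_opNorm _))
      _ = t * ‖D x‖ ^ 2 := by linear_combination (t * ‖D x‖ ^ 2) * ht
  have hsymm : ⟪D (D x), x⟫_𝕜 = ⟪D x, D x⟫_𝕜 := hD.isSymmetric _ _
  have h0 := hD.re_inner_nonneg_left (x - (t : 𝕜) • D x)
  simp only [map_sub, map_smul, inner_sub_left, inner_sub_right, inner_smul_left,
    inner_smul_right, conj_ofReal, hsymm, re_ofReal_mul, inner_self_eq_norm_sq] at h0
  calc ‖D x‖ ^ 2 = ‖D‖ * (t * ‖D x‖ ^ 2) := by linear_combination (-‖D x‖ ^ 2) * ht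
    _ ≤ ‖D‖ * re ⟪D x, x⟫_𝕜 := by gcongr; linarith

theorem IsPositive.pow [CompleteSpace Y] {E : Y →L[𝕜] Y} (hE : E.IsPositive) (n : ℕ) :
    (E ^ n).IsPositive := by
  have hsa (k : ℕ) : (E ^ k)† = E ^ k := (hE.isSelfAdjoint.pow k).adjoint_eq
  obtain ⟨k, rfl | rfl⟩ := n.even_or_odd'
  · convert isPositive_adjoint_comp_self (E ^ k) using 1
    rw [hsa, two_mul, pow_add, mul_def]
  · convert hE.conj_adjoint (E ^ k) using 1
    rw [hsa, two_mul, pow_succ, pow_add, mul_assoc, ← (Commute.self_pow E k).eq, ← mul_assoc]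
    rfl

theorem norm_le_one_of_nonneg_of_le_one {E : Y →L[𝕜] Y} (h0 : 0 ≤ E) (h1 : E ≤ 1) :
    ‖E‖ ≤ 1 := by
  have hE := (nonneg_iff_isPositive E).mp h0
  rw [norm_eq_iSup_rayleighQuotient _ hE.isSymmetric]
  refine ciSup_le fun x => abs_le.mpr ⟨?_, ?_⟩
  · exact (neg_nonpos.mpr zero_le_one).trans
      (div_nonneg (hE.re_inner_nonneg_left x) (sq_nonneg _))
  · have := (le_def E 1).mp h1 |>.re_inner_nonneg_left x
    simp only [sub_apply, inner_sub_left, map_sub] at this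
    exact div_le_one_of_le₀ (by simpa [reApplyInnerSelf] using this) (sq_nonneg _)

theorem isPositive_aeval_map [CompleteSpace Y] {E : Y →L[𝕜] Y} (hE : E.IsPositive) {p : ℝ[X]}
    (hp : ∀ i, 0 ≤ p.coeff i) : (aeval E (p.map (algebraMap ℝ 𝕜))).IsPositive := by
  rw [aeval_eq_sum_range]
  refine isPositive_sum _ fun i _ => (hE.pow i).smul_of_nonneg ?_
  simpa [coeff_map] using hp i

theorem norm_aeval_map_le {E : Y →L[𝕜] Y} (hE : ‖E‖ ≤ 1) {p : ℝ[X]} (hp : ∀ i, 0 ≤ p.coeff i) :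
    ‖aeval E (p.map (algebraMap ℝ 𝕜))‖ ≤ p.eval 1 := by
  have hpow (i : ℕ) : ‖E ^ i‖ ≤ 1 := by
    rcases i with _ | i
    · exact norm_id_le
    · exact (norm_pow_le' E i.succ_pos).trans (pow_le_one₀ (norm_nonneg E) hE)
  rw [aeval_eq_sum_range, eval_eq_sum_range, natDegree_map]
  refine (norm_sum_le _ _).trans (Finset.sum_le_sum fun i _ => ?_)
  rw [coeff_map, norm_smul, one_pow, RCLike.algebraMap_eq_ofReal, RCLike.norm_ofReal,
    abs_of_nonneg (hp i)]
  exact mul_le_mul_of_nonneg_left (hpow i) (hp i)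

theorem exists_tendsto_apply_of_monotone [CompleteSpace Y] {F : ℕ → Y →L[𝕜] Y} (hF : Monotone F)
    {C : ℝ} (hC : ∀ n, ‖F n‖ ≤ C) (x : Y) : ∃ l, Tendsto (fun n => F n x) atTop (𝓝 l) := by
  have hC0 : 0 ≤ C := (norm_nonneg _).trans (hC 0)
  have hdiff (n m : ℕ) :
      re ⟪(F m - F n) x, x⟫_𝕜 = re ⟪F m x, x⟫_𝕜 - re ⟪F n x, x⟫_𝕜 := by
    rw [sub_apply, inner_sub_left, map_sub]
  have hmono : Monotone fun n => re ⟪F n x, x⟫_𝕜 := fun n m h => by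
    have := ((le_def _ _).mp (hF h)).re_inner_nonneg_left x
    rw [hdiff] at this
    linarith
  have hbdd : BddAbove (Set.range fun n => re ⟪F n x, x⟫_𝕜) := by
    refine ⟨C * ‖x‖ * ‖x‖, ?_⟩
    rintro _ ⟨n, rfl⟩
    calc re ⟪F n x, x⟫_𝕜 ≤ ‖F n x‖ * ‖x‖ := (re_le_norm _).trans (norm_inner_le_norm _ _)
      _ ≤ C * ‖x‖ * ‖x‖ := by gcongr; exact (F n).le_of_opNorm_le (hC n) x
  have hcauchy := (tendsto_atTop_ciSup hmono hbdd).cauchySeq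
  refine cauchySeq_tendsto_of_complete (Metric.cauchySeq_iff'.mpr fun ε hε => ?_)
  obtain ⟨N, hN⟩ := Metric.cauchySeq_iff'.mp hcauchy (ε ^ 2 / (2 * C + 1)) (by positivity)
  refine ⟨N, fun n hn => ?_⟩
  have hD := (le_def _ _).mp (hF hn)
  have hsmall : re ⟪(F n - F N) x, x⟫_𝕜 < ε ^ 2 / (2 * C + 1) := by
    rw [hdiff]
    exact (le_abs_self _).trans_lt (hN n hn)
  have hnorm : ‖F n - F N‖ ≤ 2 * C + 1 := by linarith [norm_sub_le (F n) (F N), hC n, hC N]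
  have : ‖(F n - F N) x‖ ^ 2 < ε ^ 2 :=
    calc ‖(F n - F N) x‖ ^ 2 ≤ ‖F n - F N‖ * re ⟪(F n - F N) x, x⟫_𝕜 := hD.norm_apply_sq_le x
      _ ≤ (2 * C + 1) * re ⟪(F n - F N) x, x⟫_𝕜 := by
          gcongr; exact hD.re_inner_nonneg_left x
      _ < (2 * C + 1) * (ε ^ 2 / (2 * C + 1)) := by gcongr
      _ = ε ^ 2 := by field_simp
  rw [dist_eq_norm, ← sub_apply]
  exact lt_of_pow_lt_pow_left₀ 2 hε.le this

theorem isSelfAdjoint_of_tendsto_apply [CompleteSpace Y] {F : ℕ → Y →L[𝕜] Y} {L : Y →L[𝕜] Y}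
    (hF : ∀ n, IsSelfAdjoint (F n)) (hL : ∀ x, Tendsto (fun n => F n x) atTop (𝓝 (L x))) :
    IsSelfAdjoint L := by
  have hFF (n : ℕ) (x y : Y) : ⟪F n x, y⟫_𝕜 = ⟪x, F n y⟫_𝕜 := (hF n).isSymmetric x y
  refine isSelfAdjoint_iff_isSymmetric.mpr fun x y => tendsto_nhds_unique
    ((hL x).inner tendsto_const_nhds) ?_
  have := (tendsto_const_nhds (x := x)).inner (𝕜 := 𝕜) (hL y)
  simp only [← hFF] at this
  exact this

theorem eq_two_inv_smul_add_mul_self_of_tendsto [CompleteSpace Y] {E L : Y →L[𝕜] Y}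
    {F : ℕ → Y →L[𝕜] Y} (hF : ∀ n, IsSelfAdjoint (F n))
    (hL : ∀ x, Tendsto (fun n => F n x) atTop (𝓝 (L x)))
    (hrec : ∀ n, F (n + 1) = (2⁻¹ : 𝕜) • (E + F n * F n)) :
    L = (2⁻¹ : 𝕜) • (E + L * L) := by
  have hFF (n : ℕ) (x y : Y) : ⟪F n x, y⟫_𝕜 = ⟪x, F n y⟫_𝕜 := (hF n).isSymmetric x y
  ext x
  refine ext_inner_right 𝕜 fun y => tendsto_nhds_unique (((hL x).comp
    (tendsto_add_atTop_nat 1)).inner (tendsto_const_nhds (x := y))) ?_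
  convert ((tendsto_const_nhds (x := ⟪E x, y⟫_𝕜)).add ((hL x).inner (hL y))).const_mul (2⁻¹ : 𝕜)
    using 1
  · funext n
    simp [hrec, inner_smul_left, inner_add_left, hFF, map_ofNat, mul_add]
  · have hLL : ⟪L (L x), y⟫_𝕜 = ⟪L x, L y⟫_𝕜 :=
      (isSelfAdjoint_of_tendsto_apply hF hL).isSymmetric (L x) y
    simp [inner_smul_left, inner_add_left, hLL, map_ofNat, mul_add]

theorem exists_isSelfAdjoint_mul_self_eq_one_sub [CompleteSpace Y] {E : Y →L[𝕜] Y}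
    (hE : E.IsPositive) (hE1 : ‖E‖ ≤ 1) : ∃ R : Y →L[𝕜] Y, IsSelfAdjoint R ∧ R * R = 1 - E := by
  set F : ℕ → Y →L[𝕜] Y := fun n => aeval E ((sqrtApprox n).map (algebraMap ℝ 𝕜))
  have hF_rec (n : ℕ) : F (n + 1) = (2⁻¹ : 𝕜) • (E + F n * F n) := by
    simp [F, sqrtApprox, Algebra.smul_def, pow_two, map_ofNat]
  have hF_sa (n : ℕ) : IsSelfAdjoint (F n) :=
    (isPositive_aeval_map hE (sqrtApprox_coeff_nonneg n)).isSelfAdjoint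
  have hF_mono : Monotone F := monotone_nat_of_le_succ fun n => by
    rw [le_def]
    simpa [F] using isPositive_aeval_map hE (sqrtApprox_succ_sub_coeff_nonneg n)
  have hF_norm (n : ℕ) : ‖F n‖ ≤ 1 :=
    (norm_aeval_map_le hE1 (sqrtApprox_coeff_nonneg n)).trans (sqrtApprox_eval_one_le n)
  choose l hl using exists_tendsto_apply_of_monotone hF_mono hF_norm
  set L := continuousLinearMapOfTendsto F (tendsto_pi_nhds.mpr hl)
  have hL (x : Y) : Tendsto (fun n => F n x) atTop (𝓝 (L x)) := hl x
  have h2L : L + L = E + L * L := by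
    conv_lhs => rw [eq_two_inv_smul_add_mul_self_of_tendsto hF_sa hL hF_rec]
    rw [← two_smul 𝕜, smul_smul]
    norm_num
  refine ⟨1 - L, (IsSelfAdjoint.one _).sub (isSelfAdjoint_of_tendsto_apply hF_sa hL), ?_⟩
  calc (1 - L) * (1 - L) = 1 - (L + L) + L * L := by noncomm_ring
    _ = 1 - E := by rw [h2L]; abel

theorem IsPositive.exists_isSelfAdjoint_mul_self_eq [CompleteSpace Y] {P : Y →L[𝕜] Y}
    (hP : P.IsPositive) : ∃ R : Y →L[𝕜] Y, IsSelfAdjoint R ∧ R * R = P := by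
  set c : ℝ := ‖P‖ + 1
  have hc : 0 < c := by positivity
  set P₁ : Y →L[𝕜] Y := ((c⁻¹ : ℝ) : 𝕜) • P
  have hP₁ : P₁.IsPositive := hP.smul_of_nonneg (ofReal_nonneg.mpr (inv_nonneg.mpr hc.le))
  have hE : (1 - P₁).IsPositive := by
    refine ⟨((IsSelfAdjoint.one _).sub hP₁.isSelfAdjoint).isSymmetric, fun x => ?_⟩
    have hPx : re ⟪P x, x⟫_𝕜 ≤ c * ‖x‖ ^ 2 :=
      calc re ⟪P x, x⟫_𝕜 ≤ ‖P x‖ * ‖x‖ := (re_le_norm _).trans (norm_inner_le_norm _ _)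
        _ ≤ ‖P‖ * ‖x‖ * ‖x‖ := by gcongr; exact P.le_opNorm x
        _ ≤ c * ‖x‖ ^ 2 := by nlinarith [sq_nonneg ‖x‖]
    simp only [reApplyInnerSelf, P₁, sub_apply, one_apply_eq_self, smul_apply, inner_sub_left,
      inner_smul_left, conj_ofReal, map_sub, re_ofReal_mul, inner_self_eq_norm_sq]
    rw [sub_nonneg, inv_mul_le_iff₀ hc]
    exact hPx
  have hE1 : 1 - P₁ ≤ 1 := by rwa [le_def, sub_sub_cancel]
  obtain ⟨R, hR, hRR⟩ := exists_isSelfAdjoint_mul_self_eq_one_sub hE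
    (norm_le_one_of_nonneg_of_le_one ((nonneg_iff_isPositive _).mpr hE) hE1)
  refine ⟨((√c : ℝ) : 𝕜) • R, .smul (conj_ofReal _) hR, ?_⟩
  rw [smul_mul_smul, hRR, sub_sub_cancel, smul_smul, ← ofReal_mul, Real.mul_self_sqrt hc.le,
    ← ofReal_mul, mul_inv_cancel₀ hc.ne', ofReal_one, one_smul]

theorem exists_isSelfAdjoint_norm_apply_eq_s9 [CompleteSpace Y] {H : Type*} [NormedAddCommGroup H]
    [InnerProductSpace 𝕜 H] [CompleteSpace H] (B : Y →L[𝕜] H) :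
    ∃ R : Y →L[𝕜] Y, IsSelfAdjoint R ∧ ∀ y, ‖R y‖ = ‖B y‖ := by
  obtain ⟨R, hR, hRR⟩ := (isPositive_adjoint_comp_self B).exists_isSelfAdjoint_mul_self_eq
  refine ⟨R, hR, fun y => (sq_eq_sq₀ (norm_nonneg _) (norm_nonneg _)).mp ?_⟩
  rw [apply_norm_sq_eq_inner_adjoint_left, apply_norm_sq_eq_inner_adjoint_left, hR.adjoint_eq,
    ← mul_def, hRR]

end Positive

section Douglas

variable {𝕜 Y G H : Type*} [RCLike 𝕜] [NormedAddCommGroup Y] [NormedSpace 𝕜 Y]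
  [NormedAddCommGroup G] [NormedSpace 𝕜 G] [CompleteSpace G]
  [NormedAddCommGroup H] [InnerProductSpace 𝕜 H] [CompleteSpace H]

theorem exists_comp_eq_of_norm_apply_le_s9 (F : Y →L[𝕜] G) (C : Y →L[𝕜] H) {c : ℝ} (hc : 0 ≤ c)
    (h : ∀ y, ‖F y‖ ≤ c * ‖C y‖) : ∃ D : H →L[𝕜] G, D ∘L C = F ∧ ‖D‖ ≤ c := by
  set K := (LinearMap.range (C : Y →ₗ[𝕜] H)).topologicalClosure
  set e : Y →ₗ[𝕜] K := (C : Y →ₗ[𝕜] H).codRestrict K fun y =>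
    Submodule.le_topologicalClosure _ (LinearMap.mem_range_self _ y)
  have he : DenseRange e := by
    refine Subtype.dense_iff.mpr ?_
    rw [← Set.range_comp]
    exact subset_rfl
  set D := (F : Y →ₗ[𝕜] G).extendOfNorm e ∘L K.orthogonalProjectionOnto
  refine ⟨D, ?_, ?_⟩
  · ext y
    have hy : K.orthogonalProjectionOnto (C y) = e y :=
      Submodule.orthogonalProjectionOnto_mem_subspace_eq_self (e y)
    simp only [D, comp_apply, hy]
    exact LinearMap.extendOfNorm_eq he ⟨c, h⟩ y
  · calc ‖D‖ ≤ c * 1 := (opNorm_comp_le _ _).trans (mul_le_mul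
          (LinearMap.opNorm_extendOfNorm_le he hc h) K.orthogonalProjectionOnto_norm_le
          (norm_nonneg _) hc)
      _ = c := mul_one c

end Douglas

variable {𝕜 X Y X' Y' : Type*} [RCLike 𝕜]
  [NormedAddCommGroup X] [InnerProductSpace 𝕜 X] [CompleteSpace X]
  [NormedAddCommGroup Y] [InnerProductSpace 𝕜 Y] [CompleteSpace Y]
  [NormedAddCommGroup X'] [InnerProductSpace 𝕜 X'] [CompleteSpace X']
  [NormedAddCommGroup Y'] [InnerProductSpace 𝕜 Y'] [CompleteSpace Y']

theorem exists_comp_eq_of_norm_adjoint_apply_le (A : X →L[𝕜] Y) (B : X' →L[𝕜] Y) {c : ℝ}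
    (hc : 0 ≤ c) (h : ∀ y, ‖(B†) y‖ ≤ c * ‖(A†) y‖) : ∃ W : X' →L[𝕜] X, A ∘L W = B := by
  obtain ⟨D, hD, -⟩ := exists_comp_eq_of_norm_apply_le_s9 (B†) (A†) hc h
  exact ⟨D†, by simpa using congrArg adjoint hD⟩

theorem norm_adjoint_apply_apply_eq {V : X →L[𝕜] Y} (hV : ‖V‖ ≤ 1) {x : X} (hx : ‖V x‖ = ‖x‖) :
    ‖(V†) (V x)‖ = ‖V x‖ := by
  refine le_antisymm ?_ ?_
  · calc ‖(V†) (V x)‖ ≤ ‖V†‖ * ‖V x‖ := le_opNorm _ _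
      _ ≤ ‖V x‖ := by
          rw [LinearIsometryEquiv.norm_map]; exact mul_le_of_le_one_left (norm_nonneg _) hV
  · rcases (norm_nonneg (V x)).eq_or_lt with h0 | h0
    · rw [← h0]; exact norm_nonneg _
    · refine le_of_mul_le_mul_right ?_ h0
      calc ‖V x‖ * ‖V x‖ = re ⟪(V†) (V x), x⟫_𝕜 := by
            rw [adjoint_inner_left, inner_self_eq_norm_mul_norm]
        _ ≤ ‖(V†) (V x)‖ * ‖V x‖ := by
            rw [hx]; exact (re_le_norm _).trans (norm_inner_le_norm _ _)

theorem closure_range_eq_orthogonal_ker_adjoint (A : X →L[𝕜] Y) :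
    closure (Set.range A) = ((LinearMap.ker (A† : Y →ₗ[𝕜] X))ᗮ : Set Y) := by
  rw [orthogonal_ker, adjoint_adjoint, Submodule.topologicalClosure_coe]
  rfl

theorem exists_factor_left_isometric_on_closure_range (A : X →L[𝕜] Y) (T : Y →L[𝕜] Y')
    (hT : ∀ y ∈ closure (Set.range A), T y = 0 → y = 0) :
    ∃ (O : Y →L[𝕜] Y') (W : X →L[𝕜] X), ‖O‖ ≤ 1 ∧
      (∀ y ∈ closure (Set.range A), ‖O y‖ = ‖y‖) ∧ T ∘L A = O ∘L (A ∘L W) := by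
  obtain ⟨R, hR, hRA⟩ := exists_isSelfAdjoint_norm_apply_eq_s9 (A†)
  obtain ⟨Q, hQ, hQR⟩ := exists_isSelfAdjoint_norm_apply_eq_s9 (T ∘L R)
  obtain ⟨W₁, hW₁⟩ := exists_comp_eq_of_norm_adjoint_apply_le R A zero_le_one fun y => by
    rw [hR.adjoint_eq, one_mul, hRA]
  obtain ⟨W₂, hW₂⟩ := exists_comp_eq_of_norm_adjoint_apply_le A Q (norm_nonneg T) fun y => by
    rw [hQ.adjoint_eq, hQR, ← hRA]; exact T.le_opNorm _
  obtain ⟨O, hO, hO1⟩ := exists_comp_eq_of_norm_apply_le_s9 (T ∘L R) Q zero_le_one fun y => by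
    rw [one_mul, hQR]
  have hker : LinearMap.ker (Q : Y →ₗ[𝕜] Y) ≤ LinearMap.ker (A† : Y →ₗ[𝕜] X) := by
    intro z hz
    have hRz : R z ∈ closure (Set.range A) := by
      rw [closure_range_eq_orthogonal_ker_adjoint, SetLike.mem_coe, Submodule.mem_orthogonal]
      intro w hw
      have hRw : R w = 0 := by
        rw [← norm_eq_zero, hRA, norm_eq_zero]
        exact hw
      rw [← adjoint_inner_left, hR.adjoint_eq, hRw, inner_zero_left]
    have := hT (R z) hRz (by rw [← norm_eq_zero, ← comp_apply, ← hQR, norm_eq_zero]; exact hz)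
    rw [LinearMap.mem_ker, coe_coe, ← norm_eq_zero, ← hRA, this, norm_zero]
  refine ⟨O, W₂ ∘L W₁, hO1, fun y hy => ?_, ?_⟩
  · have hyQ : y ∈ closure (Set.range Q) := by
      rw [closure_range_eq_orthogonal_ker_adjoint, hQ.adjoint_eq]
      rw [closure_range_eq_orthogonal_ker_adjoint] at hy
      exact Submodule.orthogonal_le hker hy
    refine Set.EqOn.closure (f := fun y => ‖O y‖) ?_ (by fun_prop) (by fun_prop) hyQ
    rintro _ ⟨x, rfl⟩
    dsimp only
    rw [← comp_apply O, hO, hQR]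
  · calc T ∘L A = (T ∘L R) ∘L W₁ := by rw [comp_assoc, hW₁]
      _ = O ∘L (A ∘L W₂) ∘L W₁ := by rw [← hO, hW₂]; rfl
      _ = O ∘L (A ∘L (W₂ ∘L W₁)) := rfl

theorem exists_factor_right_isometric_on_orthogonal_ker (A : X →L[𝕜] Y) (S : X' →L[𝕜] X)
    (hS : (LinearMap.ker (A : X →ₗ[𝕜] Y))ᗮ ≤ (LinearMap.range (S : X' →ₗ[𝕜] X)).topologicalClosure) :
    ∃ (W : Y →L[𝕜] Y) (U : X' →L[𝕜] X),
      (∀ x ∈ (LinearMap.ker (A ∘L S : X' →ₗ[𝕜] Y))ᗮ, ‖U x‖ = ‖x‖) ∧ A ∘L S = W ∘L (A ∘L U) := by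
  have hS' : ∀ x ∈ closure (Set.range (A†)), (S†) x = 0 → x = 0 := by
    intro x hx hSx
    rw [closure_range_eq_orthogonal_ker_adjoint, adjoint_adjoint] at hx
    have h1 : x ∈ (LinearMap.range (S : X' →ₗ[𝕜] X))ᗮᗮ := by
      rw [Submodule.orthogonal_orthogonal_eq_closure]; exact hS hx
    have h2 : x ∈ (LinearMap.range (S : X' →ₗ[𝕜] X))ᗮ := by rw [orthogonal_range]; exact hSx
    simpa [Submodule.inf_orthogonal_eq_bot] using Submodule.mem_inf.mpr ⟨h2, h1⟩
  obtain ⟨O, W, hO1, hO, hfac⟩ := exists_factor_left_isometric_on_closure_range (A†) (S†) hS'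
  refine ⟨W†, O†, fun x hx => ?_, by simpa [comp_assoc] using congrArg adjoint hfac⟩
  have hx' : x ∈ closure (Set.range (O ∘L (A† ∘L W))) := by
    rw [← hfac, ← adjoint_comp, closure_range_eq_orthogonal_ker_adjoint, adjoint_adjoint]
    exact hx
  refine Set.EqOn.closure (f := fun u => ‖(O†) u‖) ?_ (by fun_prop) (by fun_prop) hx'
  rintro _ ⟨y, rfl⟩
  exact norm_adjoint_apply_apply_eq hO1 (hO _ (subset_closure (Set.mem_range_self _)))

end ContinuousLinearMap

/-- Refinement of the factorization `A' = T ∘ A ∘ S`: (a) if `T` is injective on the closure of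
the range of `A`, the connecting operator on the left can be chosen isometric there; (b) if the
range of `S` is dense in `(ker A)ᗮ`, the connecting operator on the right can be chosen
isometric on `(ker A')ᗮ`. -/
theorem factorization_refinement
    {𝕜 X Y X' Y' : Type*} [RCLike 𝕜]
    [NormedAddCommGroup X] [InnerProductSpace 𝕜 X] [CompleteSpace X]
    [NormedAddCommGroup Y] [InnerProductSpace 𝕜 Y] [CompleteSpace Y]
    [NormedAddCommGroup X'] [InnerProductSpace 𝕜 X'] [CompleteSpace X']
    [NormedAddCommGroup Y'] [InnerProductSpace 𝕜 Y'] [CompleteSpace Y']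
    (A : X →L[𝕜] Y) (A' : X' →L[𝕜] Y')
    (T : Y →L[𝕜] Y') (S : X' →L[𝕜] X) (hfac : A' = T ∘L (A ∘L S)) :
    ((∀ y ∈ closure (Set.range ⇑A), T y = 0 → y = 0) →
      ∃ (O : Y →L[𝕜] Y') (S' : X' →L[𝕜] X),
        (∀ y ∈ closure (Set.range ⇑A), ‖O y‖ = ‖y‖) ∧ A' = O ∘L (A ∘L S')) ∧
    ((LinearMap.ker (A : X →ₗ[𝕜] Y))ᗮ ≤ (LinearMap.range (S : X' →ₗ[𝕜] X)).topologicalClosure →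
      ∃ (T' : Y →L[𝕜] Y') (U : X' →L[𝕜] X),
        (∀ x ∈ (LinearMap.ker (A' : X' →ₗ[𝕜] Y'))ᗮ, ‖U x‖ = ‖x‖) ∧ A' = T' ∘L (A ∘L U)) := by
  subst hfac
  constructor
  · intro hT
    obtain ⟨O, W, -, hO, hTA⟩ := exists_factor_left_isometric_on_closure_range A T hT
    exact ⟨O, W ∘L S, hO, by rw [← comp_assoc, hTA]; rfl⟩
  · intro hS
    obtain ⟨W, U, hU, hAS⟩ := exists_factor_right_isometric_on_orthogonal_ker A S hS
    refine ⟨T ∘L W, U, fun x hx => hU x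
      (Submodule.orthogonal_le (LinearMap.ker_le_ker_comp _ _) hx), ?_⟩
    rw [hAS]
    rfl
end

section
/- Let X be an infinite-dimensional Hilbert space over ℝ or ℂ, Y a normed space, D ⊆ X a set, and F : X → Y a map that is completely continuous on D, meaning: for every sequence (x_n) in D converging weakly to some x ∈ D, F(x_n) converges to F(x) in norm. Then for every point x† in the topological interior of D there exist ρ > 0 and a sequence (x_n) in D with ‖x_n − x†‖ = ρ for all n and ‖F(x_n) − F(x†)‖ → 0 as n → ∞; in particular, F is locally ill-posed at every interior point of D. -/
/-!
Gram–Schmidt applied to a basis of the infinite-dimensional space yields an orthonormal sequence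
`eₙ`, and Bessel's inequality forces `⟪y, eₙ⟫ → 0` for every `y`. Hence `x† + ρ eₙ` lies on the
sphere of radius `ρ` about `x†` yet converges weakly to `x†`; for `ρ` small these points lie in `D`,
so complete continuity sends their images to `F x†` in norm.
-/

open Filter Topology

section

variable {𝕜 E : Type*} [RCLike 𝕜] [NormedAddCommGroup E] [InnerProductSpace 𝕜 E]

theorem exists_orthonormal_nat_of_not_finiteDimensional (h : ¬ FiniteDimensional 𝕜 E) :
    ∃ e : ℕ → E, Orthonormal 𝕜 e := by
  let b := Module.Free.chooseBasis 𝕜 E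
  have : Infinite (Module.Free.ChooseBasisIndex 𝕜 E) := by
    rw [← not_finite_iff_infinite]
    intro
    exact h (Module.Finite.of_basis b)
  let ι := Infinite.natEmbedding (Module.Free.ChooseBasisIndex 𝕜 E)
  exact ⟨InnerProductSpace.gramSchmidtNormed 𝕜 (b ∘ ι),
    InnerProductSpace.gramSchmidtNormed_orthonormal (b.linearIndependent.comp ι ι.injective)⟩

theorem Orthonormal.tendsto_inner_right_cofinite_zero {ι : Type*} {e : ι → E}
    (he : Orthonormal 𝕜 e) (y : E) :
    Tendsto (fun i => inner 𝕜 y (e i)) cofinite (𝓝 0) := by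
  have hsq : Tendsto (fun i => ‖inner 𝕜 (e i) y‖ ^ 2) cofinite (𝓝 0) :=
    (he.inner_products_summable y).tendsto_cofinite_zero
  have hnorm : Tendsto (fun i => ‖inner 𝕜 (e i) y‖) cofinite (𝓝 0) := by
    simpa only [Real.sqrt_sq (norm_nonneg _), Real.sqrt_zero] using hsq.sqrt
  refine tendsto_zero_iff_norm_tendsto_zero.2 ?_
  simpa only [norm_inner_symm y] using hnorm

theorem exists_seq_norm_sub_eq_tendsto_inner (h : ¬ FiniteDimensional 𝕜 E) (x : E) {ρ : ℝ}
    (hρ : 0 ≤ ρ) :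
    ∃ u : ℕ → E, (∀ n, ‖u n - x‖ = ρ) ∧
      ∀ y : E, Tendsto (fun n => inner 𝕜 y (u n)) atTop (𝓝 (inner 𝕜 y x)) := by
  obtain ⟨e, he⟩ := exists_orthonormal_nat_of_not_finiteDimensional h
  refine ⟨fun n => x + (ρ : 𝕜) • e n, fun n => ?_, fun y => ?_⟩
  · simp [norm_smul, he.1 n, abs_of_nonneg hρ]
  · have hlim := tendsto_const_nhds (x := (ρ : 𝕜)) |>.mul
      (Nat.cofinite_eq_atTop ▸ he.tendsto_inner_right_cofinite_zero y) |>.const_add (inner 𝕜 y x)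
    simpa only [inner_add_right, inner_smul_right, mul_zero, add_zero] using hlim

end

theorem completely_continuous_locally_illposed_general
    {𝕜 X Y : Type*} [RCLike 𝕜]
    [NormedAddCommGroup X] [InnerProductSpace 𝕜 X]
    [NormedAddCommGroup Y]
    (hXinf : ¬ FiniteDimensional 𝕜 X)
    (D : Set X) (F : X → Y)
    (hF : ∀ (xseq : ℕ → X) (x : X), (∀ n, xseq n ∈ D) → x ∈ D →
      (∀ y : X, Tendsto (fun n => (inner 𝕜 y (xseq n) : 𝕜)) atTop (𝓝 (inner 𝕜 y x))) →
      Tendsto (fun n => F (xseq n)) atTop (𝓝 (F x))) :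
    ∀ xdag ∈ interior D, ∃ ρ : ℝ, 0 < ρ ∧ ∃ xseq : ℕ → X,
      (∀ n, xseq n ∈ D) ∧ (∀ n, ‖xseq n - xdag‖ = ρ) ∧
      Tendsto (fun n => ‖F (xseq n) - F xdag‖) atTop (𝓝 0) := by
  intro xdag hxdag
  obtain ⟨ε, hε, hball⟩ := Metric.isOpen_iff.1 isOpen_interior xdag hxdag
  obtain ⟨u, hu_norm, hu_weak⟩ := exists_seq_norm_sub_eq_tendsto_inner hXinf xdag (half_pos hε).le
  have hu_mem : ∀ n, u n ∈ D := fun n => interior_subset <| hball <| by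
    rw [Metric.mem_ball, dist_eq_norm, hu_norm]
    linarith
  exact ⟨ε / 2, half_pos hε, u, hu_mem, hu_norm,
    tendsto_iff_norm_sub_tendsto_zero.1 (hF u xdag hu_mem (interior_subset hxdag) hu_weak)⟩

/-- A completely continuous map on a subset of an infinite-dimensional Hilbert space is locally
ill-posed at every interior point of its domain: there are points at a fixed positive distance
`ρ` from `x†` whose images converge to `F(x†)`. -/
theorem completely_continuous_locally_illposed
    {𝕜 X Y : Type*} [RCLike 𝕜]
    [NormedAddCommGroup X] [InnerProductSpace 𝕜 X] [CompleteSpace X]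
    [NormedAddCommGroup Y]
    (hXinf : ¬ FiniteDimensional 𝕜 X)
    (D : Set X) (F : X → Y)
    (hF : ∀ (xseq : ℕ → X) (x : X), (∀ n, xseq n ∈ D) → x ∈ D →
      (∀ y : X, Tendsto (fun n => (inner 𝕜 y (xseq n) : 𝕜)) atTop (𝓝 (inner 𝕜 y x))) →
      Tendsto (fun n => F (xseq n)) atTop (𝓝 (F x))) :
    ∀ xdag ∈ interior D, ∃ ρ : ℝ, 0 < ρ ∧ ∃ xseq : ℕ → X,
      (∀ n, xseq n ∈ D) ∧ (∀ n, ‖xseq n - xdag‖ = ρ) ∧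
      Tendsto (fun n => ‖F (xseq n) - F xdag‖) atTop (𝓝 0) :=
  completely_continuous_locally_illposed_general hXinf D F hF
end

section
/- Let X and Y be normed spaces, x† ∈ X, ρ > 0, B = {x : ‖x − x†‖ ≤ ρ}, F : X → Y a map, and A : X → Y a bounded linear operator (playing the role of F'(x†)). For σ ∈ [0,1] and q_σ > 0, say condition TCC(σ, q_σ) holds if ‖F(x) − F(x†) − A(x − x†)‖ ≤ q_σ ‖A(x − x†)‖^{1−σ} ‖F(x) − F(x†)‖^{σ} for all x ∈ B. Then: (1) if TCC(σ, q_σ) holds for some σ ∈ [0,1], where in case σ = 1 additionally q_1 < 1, then there exists K̄ > 0 with ‖F(x) − F(x†)‖ ≤ K̄ ‖A(x − x†)‖ for all x ∈ B; (2) if TCC(σ, q_σ) holds for some σ ∈ [0,1], where in case σ = 0 additionally q_0 < 1, then there exists K > 0 with K ‖A(x − x†)‖ ≤ ‖F(x) − F(x†)‖ for all x ∈ B; (3) conversely, if there exist constants 0 < K ≤ K̄ with K ‖A(x − x†)‖ ≤ ‖F(x) − F(x†)‖ ≤ K̄ ‖A(x − x†)‖ for all x ∈ B, then for every σ ∈ [0,1]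 there exists q_σ > 0 such that TCC(σ, q_σ) holds. -/
/-! With `a = ‖A(x − x†)‖`, `f = ‖F(x) − F(x†)‖` and `r = ‖F(x) − F(x†) − A(x − x†)‖`, the
triangle inequality gives `f ≤ a + r`, `a ≤ f + r` and `r ≤ f + a`, and everything is scalar.
If `f ≤ a + q a^(1−σ) f^σ` with `σ < 1` but `f > K a`, then `a^(1−σ) < (f/K)^(1−σ)` and so
`f < f/K + q K^(σ−1) f`, which is absurd once `K` is large. The lower bound is the same argument
with `a` and `f` exchanged and `σ` replaced by `1 − σ`; the converse only needs
`a = a^(1−σ) a^σ ≤ K^(−σ) a^(1−σ) f^σ`. -/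

open Real

lemma rpow_one_sub_mul_rpow_self {a : ℝ} (ha : 0 ≤ a) (σ : ℝ) : a ^ (1 - σ) * a ^ σ = a := by
  rw [← rpow_add' ha (by simp), sub_add_cancel, rpow_one]

lemma le_mul_of_le_add_mul_rpow {σ q K a f : ℝ} (hσ : σ < 1) (hq : 0 ≤ q) (hK : 2 ≤ K)
    (hqK : 2 * q ≤ K ^ (1 - σ)) (ha : 0 ≤ a) (hf : 0 ≤ f)
    (h : f ≤ a + q * a ^ (1 - σ) * f ^ σ) : f ≤ K * a := by
  by_contra! hlt
  have hK0 : 0 < K := by linarith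
  have hf0 : 0 < f := (mul_nonneg hK0.le ha).trans_lt hlt
  have haf : a < f / K := by rwa [lt_div_iff₀' hK0]
  have hqK' : q / K ^ (1 - σ) ≤ 1 / 2 := by
    rw [div_le_iff₀ (by positivity)]
    linarith
  have hsecond : q * a ^ (1 - σ) * f ^ σ ≤ f / 2 :=
    calc q * a ^ (1 - σ) * f ^ σ ≤ q * (f / K) ^ (1 - σ) * f ^ σ := by
          gcongr
      _ = q / K ^ (1 - σ) * (f ^ (1 - σ) * f ^ σ) := by
          rw [div_rpow hf hK0.le]
          ring
      _ = q / K ^ (1 - σ) * f := by rw [rpow_one_sub_mul_rpow_self hf]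
      _ ≤ f / 2 := by nlinarith
  have hfirst : f / K ≤ f / 2 := div_le_div_of_nonneg_left hf two_pos hK
  linarith

lemma exists_le_mul_of_le_add_mul_rpow {σ q : ℝ} (hσ : σ ≤ 1) (hq : 0 < q)
    (hq1 : σ = 1 → q < 1) :
    ∃ K, 0 < K ∧ ∀ a f : ℝ, 0 ≤ a → 0 ≤ f → f ≤ a + q * a ^ (1 - σ) * f ^ σ → f ≤ K * a := by
  rcases hσ.eq_or_lt with rfl | hσ1
  · have hq1 : 0 < 1 - q := sub_pos.2 (hq1 rfl)
    refine ⟨(1 - q)⁻¹, inv_pos.2 hq1, fun a f _ _ h => ?_⟩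
    simp only [sub_self, rpow_zero, rpow_one, mul_one] at h
    rw [inv_mul_eq_div, le_div_iff₀ hq1]
    linarith
  · refine ⟨max 2 ((2 * q) ^ (1 - σ)⁻¹), by positivity, fun a f ha hf h =>
      le_mul_of_le_add_mul_rpow hσ1 hq.le (le_max_left _ _) ?_ ha hf h⟩
    calc 2 * q = ((2 * q) ^ (1 - σ)⁻¹) ^ (1 - σ) :=
          (rpow_inv_rpow (by positivity) (by linarith)).symm
      _ ≤ _ := by
          gcongr
          exact le_max_right _ _

lemma exists_mul_le_of_le_add_mul_rpow {σ q : ℝ} (hσ : 0 ≤ σ) (hq : 0 < q)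
    (hq0 : σ = 0 → q < 1) :
    ∃ K, 0 < K ∧ ∀ a f : ℝ, 0 ≤ a → 0 ≤ f → a ≤ f + q * a ^ (1 - σ) * f ^ σ → K * a ≤ f := by
  obtain ⟨K, hK, hle⟩ :=
    exists_le_mul_of_le_add_mul_rpow (σ := 1 - σ) (by linarith) hq (fun h => hq0 (by linarith))
  refine ⟨K⁻¹, inv_pos.2 hK, fun a f ha hf h => ?_⟩
  rw [inv_mul_le_iff₀ hK]
  exact hle f a hf ha (by rwa [sub_sub_cancel, mul_right_comm])

lemma le_mul_rpow_mul_rpow_of_mul_le_of_le_mul {σ K Kbar a f r : ℝ} (hσ : 0 ≤ σ) (hK : 0 < K)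
    (hKbar : 0 ≤ Kbar) (ha : 0 ≤ a) (hlow : K * a ≤ f) (hup : f ≤ Kbar * a) (hr : r ≤ f + a) :
    r ≤ (Kbar + 1) / K ^ σ * a ^ (1 - σ) * f ^ σ :=
  calc r ≤ (Kbar + 1) * a := by linarith
    _ = (Kbar + 1) / K ^ σ * (K ^ σ * (a ^ (1 - σ) * a ^ σ)) := by
        rw [rpow_one_sub_mul_rpow_self ha]
        field_simp
    _ = (Kbar + 1) / K ^ σ * a ^ (1 - σ) * (K * a) ^ σ := by
        rw [mul_rpow hK.le ha]
        ring
    _ ≤ (Kbar + 1) / K ^ σ * a ^ (1 - σ) * f ^ σ := by gcongr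

theorem tangential_cone_conditions_general
    {𝕜 X Y : Type*} [NontriviallyNormedField 𝕜]
    [NormedAddCommGroup X] [NormedSpace 𝕜 X]
    [NormedAddCommGroup Y] [NormedSpace 𝕜 Y]
    (xdag : X) (ρ : ℝ) (F : X → Y) (A : X →L[𝕜] Y) :
    (∀ sig q : ℝ, sig ∈ Set.Icc (0:ℝ) 1 → 0 < q → (sig = 1 → q < 1) →
      (∀ x ∈ Metric.closedBall xdag ρ,
        ‖F x - F xdag - A (x - xdag)‖ ≤
          q * ‖A (x - xdag)‖ ^ ((1:ℝ) - sig) * ‖F x - F xdag‖ ^ sig) →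
      ∃ Kbar : ℝ, 0 < Kbar ∧ ∀ x ∈ Metric.closedBall xdag ρ,
        ‖F x - F xdag‖ ≤ Kbar * ‖A (x - xdag)‖) ∧
    (∀ sig q : ℝ, sig ∈ Set.Icc (0:ℝ) 1 → 0 < q → (sig = 0 → q < 1) →
      (∀ x ∈ Metric.closedBall xdag ρ,
        ‖F x - F xdag - A (x - xdag)‖ ≤
          q * ‖A (x - xdag)‖ ^ ((1:ℝ) - sig) * ‖F x - F xdag‖ ^ sig) →
      ∃ Kund : ℝ, 0 < Kund ∧ ∀ x ∈ Metric.closedBall xdag ρ,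
        Kund * ‖A (x - xdag)‖ ≤ ‖F x - F xdag‖) ∧
    (∀ Kund Kbar : ℝ, 0 < Kund → Kund ≤ Kbar →
      (∀ x ∈ Metric.closedBall xdag ρ,
        Kund * ‖A (x - xdag)‖ ≤ ‖F x - F xdag‖ ∧
        ‖F x - F xdag‖ ≤ Kbar * ‖A (x - xdag)‖) →
      ∀ sig ∈ Set.Icc (0:ℝ) 1, ∃ q : ℝ, 0 < q ∧
        ∀ x ∈ Metric.closedBall xdag ρ,
          ‖F x - F xdag - A (x - xdag)‖ ≤
            q * ‖A (x - xdag)‖ ^ ((1:ℝ) - sig) * ‖F x - F xdag‖ ^ sig) := by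
  refine ⟨?_, ?_, ?_⟩
  · rintro σ q hσ hq hq1 htcc
    obtain ⟨K, hK, hle⟩ := exists_le_mul_of_le_add_mul_rpow hσ.2 hq hq1
    exact ⟨K, hK, fun x hx => hle _ _ (norm_nonneg _) (norm_nonneg _)
      ((norm_le_norm_add_norm_sub' _ _).trans (add_le_add_right (htcc x hx) _))⟩
  · rintro σ q hσ hq hq0 htcc
    obtain ⟨K, hK, hle⟩ := exists_mul_le_of_le_add_mul_rpow hσ.1 hq hq0
    exact ⟨K, hK, fun x hx => hle _ _ (norm_nonneg _) (norm_nonneg _)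
      ((norm_le_norm_add_norm_sub _ _).trans (add_le_add_right (htcc x hx) _))⟩
  · rintro Kund Kbar hKund hKK hest σ hσ
    have hKbar : 0 < Kbar := hKund.trans_le hKK
    refine ⟨(Kbar + 1) / Kund ^ σ, by positivity, fun x hx => ?_⟩
    exact le_mul_rpow_mul_rpow_of_mul_le_of_le_mul hσ.1 hKund hKbar.le (norm_nonneg _)
      (hest x hx).1 (hest x hx).2 (norm_sub_le _ _)

/-- Lemma on tangential cone conditions `TCC(σ, q)`:
`‖F(x) − F(x†) − A(x − x†)‖ ≤ q ‖A(x − x†)‖^(1−σ) ‖F(x) − F(x†)‖^σ` on the closed ball `B`.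
(1) `TCC(σ, q)` (with `q < 1` if `σ = 1`) implies an upper bound
`‖F(x) − F(x†)‖ ≤ K̄ ‖A(x − x†)‖`; (2) `TCC(σ, q)` (with `q < 1` if `σ = 0`) implies a lower
bound `K ‖A(x − x†)‖ ≤ ‖F(x) − F(x†)‖`; (3) conversely, the two-sided estimate implies
`TCC(σ, q_σ)` for every `σ ∈ [0,1]` and suitable `q_σ > 0`. -/
theorem tangential_cone_conditions
    {𝕜 X Y : Type*} [NontriviallyNormedField 𝕜]
    [NormedAddCommGroup X] [NormedSpace 𝕜 X]
    [NormedAddCommGroup Y] [NormedSpace 𝕜 Y]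
    (xdag : X) (ρ : ℝ) (hρ : 0 < ρ) (F : X → Y) (A : X →L[𝕜] Y) :
    (∀ sig q : ℝ, sig ∈ Set.Icc (0:ℝ) 1 → 0 < q → (sig = 1 → q < 1) →
      (∀ x ∈ Metric.closedBall xdag ρ,
        ‖F x - F xdag - A (x - xdag)‖ ≤
          q * ‖A (x - xdag)‖ ^ ((1:ℝ) - sig) * ‖F x - F xdag‖ ^ sig) →
      ∃ Kbar : ℝ, 0 < Kbar ∧ ∀ x ∈ Metric.closedBall xdag ρ,
        ‖F x - F xdag‖ ≤ Kbar * ‖A (x - xdag)‖) ∧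
    (∀ sig q : ℝ, sig ∈ Set.Icc (0:ℝ) 1 → 0 < q → (sig = 0 → q < 1) →
      (∀ x ∈ Metric.closedBall xdag ρ,
        ‖F x - F xdag - A (x - xdag)‖ ≤
          q * ‖A (x - xdag)‖ ^ ((1:ℝ) - sig) * ‖F x - F xdag‖ ^ sig) →
      ∃ Kund : ℝ, 0 < Kund ∧ ∀ x ∈ Metric.closedBall xdag ρ,
        Kund * ‖A (x - xdag)‖ ≤ ‖F x - F xdag‖) ∧
    (∀ Kund Kbar : ℝ, 0 < Kund → Kund ≤ Kbar →
      (∀ x ∈ Metric.closedBall xdag ρ,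
        Kund * ‖A (x - xdag)‖ ≤ ‖F x - F xdag‖ ∧
        ‖F x - F xdag‖ ≤ Kbar * ‖A (x - xdag)‖) →
      ∀ sig ∈ Set.Icc (0:ℝ) 1, ∃ q : ℝ, 0 < q ∧
        ∀ x ∈ Metric.closedBall xdag ρ,
          ‖F x - F xdag - A (x - xdag)‖ ≤
            q * ‖A (x - xdag)‖ ^ ((1:ℝ) - sig) * ‖F x - F xdag‖ ^ sig) :=
  tangential_cone_conditions_general xdag ρ F A
end

section
/- Let X and Y be Banach spaces, x† ∈ X, ρ > 0, B = {x : ‖x − x†‖ ≤ ρ}, and let F : X → Y be Fréchet differentiable at every point of B. Suppose there exist a constant C_R > 0 and an exponent κ ∈ (0,1] such that for all x, x̃ ∈ B there is a bounded linear operator R(x,x̃) : Y → Y with F'(x) = R(x,x̃) ∘ F'(x̃) and ‖R(x,x̃) − I‖ ≤ C_R ‖x − x̃‖^κ. Then for all x ∈ B: ‖F(x) − F(x†) − F'(x†)(x − x†)‖ ≤ (C_R / (1 + κ)) ‖F'(x†)(x − x†)‖ ‖x − x†‖^κ. -/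
/-!
Along the segment `x_t = x† + t v`, `v = x − x†`, the factorization gives
`‖F'(x_t) v − F'(x†) v‖ ≤ ‖R(x_t, x†) − I‖ ‖F'(x†) v‖ ≤ c t^κ` with `c = C_R ‖v‖^κ ‖F'(x†) v‖`.
The remainder `t ↦ F(x_t) − F(x†) − t F'(x†) v` therefore has derivative bounded by `c t^κ`, and
comparing it with the barrier `c t^(κ+1) / (κ+1)` bounds its value at `t = 1` by `c / (1 + κ)`.
-/

open Set ContinuousLinearMap

theorem norm_sub_le_of_norm_deriv_right_le_mul_rpow {E : Type*} [NormedAddCommGroup E]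
    [NormedSpace ℝ E] {f f' : ℝ → E} {b c κ : ℝ} (hb : 0 ≤ b) (hκ : 0 ≤ κ)
    (hf : ContinuousOn f (Icc 0 b)) (hf' : ∀ t ∈ Ico 0 b, HasDerivWithinAt f (f' t) (Ici t) t)
    (bound : ∀ t ∈ Ico 0 b, ‖f' t‖ ≤ c * t ^ κ) :
    ‖f b - f 0‖ ≤ c / (κ + 1) * b ^ (κ + 1) := by
  have hκ1 : κ + 1 ≠ 0 := by positivity
  have hB : ∀ t : ℝ, HasDerivAt (fun s => c / (κ + 1) * s ^ (κ + 1)) (c * t ^ κ) t := by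
    intro t
    refine ((Real.hasDerivAt_rpow_const (Or.inr (by linarith))).const_mul _).congr_deriv ?_
    rw [add_sub_cancel_right]
    field_simp
  refine image_norm_le_of_norm_deriv_right_le_deriv_boundary (f := fun t => f t - f 0)
    (hf.sub continuousOn_const) (fun t ht => (hf' t ht).sub_const _) ?_ hB bound
    (right_mem_Icc.2 hb)
  simp [Real.zero_rpow hκ1]

theorem norm_apply_sub_apply_le_of_eq_comp {𝕜 X Y : Type*} [NontriviallyNormedField 𝕜]
    [NormedAddCommGroup X] [NormedSpace 𝕜 X] [NormedAddCommGroup Y] [NormedSpace 𝕜 Y]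
    {A B : X →L[𝕜] Y} {R : Y →L[𝕜] Y} (h : A = R ∘L B) (v : X) :
    ‖A v - B v‖ ≤ ‖R - ContinuousLinearMap.id 𝕜 Y‖ * ‖B v‖ := by
  simpa [h] using (R - ContinuousLinearMap.id 𝕜 Y).le_opNorm (B v)

theorem norm_sub_sub_fderiv_le_of_norm_fderiv_sub_le_rpow {X Y : Type*}
    [NormedAddCommGroup X] [NormedSpace ℝ X] [NormedAddCommGroup Y] [NormedSpace ℝ Y]
    {F : X → Y} {F' : X → X →L[ℝ] Y} {x₀ v : X} {c κ : ℝ} (hκ : 0 ≤ κ)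
    (hF : ∀ t ∈ Icc (0 : ℝ) 1, HasFDerivAt F (F' (x₀ + t • v)) (x₀ + t • v))
    (hdev : ∀ t ∈ Ico (0 : ℝ) 1, ‖F' (x₀ + t • v) v - F' x₀ v‖ ≤ c * t ^ κ) :
    ‖F (x₀ + v) - F x₀ - F' x₀ v‖ ≤ c / (κ + 1) := by
  have hderiv : ∀ t ∈ Icc (0 : ℝ) 1, HasDerivAt (fun s : ℝ => F (x₀ + s • v) - s • F' x₀ v)
      (F' (x₀ + t • v) v - F' x₀ v) t := by
    intro t ht
    have hline : HasDerivAt (fun s : ℝ => x₀ + s • v) v t := by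
      simpa using ((hasDerivAt_id t).smul_const v).const_add x₀
    have hlin : HasDerivAt (fun s : ℝ => s • F' x₀ v) (F' x₀ v) t := by
      simpa using (hasDerivAt_id t).smul_const (F' x₀ v)
    exact ((hF t ht).comp_hasDerivAt t hline).sub hlin
  have hremainder := norm_sub_le_of_norm_deriv_right_le_mul_rpow zero_le_one hκ
    (fun t ht => (hderiv t ht).continuousAt.continuousWithinAt)
    (fun t ht => (hderiv t (Ico_subset_Icc_self ht)).hasDerivWithinAt) hdev
  simpa [sub_right_comm] using hremainder

theorem factorization_implies_cone_condition_general
    {𝕜 X Y : Type*} [RCLike 𝕜]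
    [NormedAddCommGroup X] [NormedSpace 𝕜 X]
    [NormedAddCommGroup Y] [NormedSpace 𝕜 Y]
    (xdag : X) (ρ : ℝ) (F : X → Y) (F' : X → (X →L[𝕜] Y))
    (hdiff : ∀ x ∈ Metric.closedBall xdag ρ, HasFDerivAt F (F' x) x)
    (CR κ : ℝ) (hκ : κ ∈ Set.Ioc (0:ℝ) 1)
    (hfac : ∀ x ∈ Metric.closedBall xdag ρ, ∀ xt ∈ Metric.closedBall xdag ρ,
      ∃ R : Y →L[𝕜] Y, F' x = R ∘L F' xt ∧
        ‖R - ContinuousLinearMap.id 𝕜 Y‖ ≤ CR * ‖x - xt‖ ^ κ) :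
    ∀ x ∈ Metric.closedBall xdag ρ,
      ‖F x - F xdag - F' xdag (x - xdag)‖ ≤
        (CR / (1 + κ)) * ‖F' xdag (x - xdag)‖ * ‖x - xdag‖ ^ κ := by
  let : NormedSpace ℝ X := NormedSpace.restrictScalars ℝ 𝕜 X
  let : NormedSpace ℝ Y := NormedSpace.restrictScalars ℝ 𝕜 Y
  have : IsScalarTower ℝ 𝕜 X := RestrictScalars.isScalarTower ℝ 𝕜 X
  have : IsScalarTower ℝ 𝕜 Y := RestrictScalars.isScalarTower ℝ 𝕜 Y
  intro x hx
  set v := x - xdag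
  have hcenter : xdag ∈ Metric.closedBall xdag ρ :=
    Metric.mem_closedBall_self (dist_nonneg.trans hx)
  have hseg : ∀ t ∈ Icc (0 : ℝ) 1, xdag + t • v ∈ Metric.closedBall xdag ρ :=
    fun t ht => (convex_closedBall xdag ρ).add_smul_sub_mem hcenter hx ht
  have hdev : ∀ t ∈ Ico (0 : ℝ) 1,
      ‖F' (xdag + t • v) v - F' xdag v‖ ≤ CR * ‖F' xdag v‖ * ‖v‖ ^ κ * t ^ κ := by
    intro t ht
    obtain ⟨R, hR, hRnorm⟩ := hfac _ (hseg t (Ico_subset_Icc_self ht)) xdag hcenter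
    calc ‖F' (xdag + t • v) v - F' xdag v‖ ≤ ‖R - ContinuousLinearMap.id 𝕜 Y‖ * ‖F' xdag v‖ :=
          norm_apply_sub_apply_le_of_eq_comp hR v
      _ ≤ CR * ‖t • v‖ ^ κ * ‖F' xdag v‖ := by
          rw [add_sub_cancel_left] at hRnorm
          gcongr
      _ = CR * ‖F' xdag v‖ * ‖v‖ ^ κ * t ^ κ := by
          rw [norm_smul, Real.norm_of_nonneg ht.1, Real.mul_rpow ht.1 (norm_nonneg v)]
          ring
  have hcone := norm_sub_sub_fderiv_le_of_norm_fderiv_sub_le_rpow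
    (F' := fun x => (F' x).restrictScalars ℝ) hκ.1.le
    (fun t ht => (hdiff _ (hseg t ht)).restrictScalars ℝ) hdev
  simpa [v, add_comm 1 κ, mul_div_right_comm] using hcone

/-- The derivative factorization condition `F'(x) = R(x,x̃) ∘ F'(x̃)` with
`‖R(x,x̃) − I‖ ≤ C_R ‖x − x̃‖^κ` implies the tangential cone type estimate
`‖F(x) − F(x†) − F'(x†)(x − x†)‖ ≤ (C_R/(1+κ)) ‖F'(x†)(x − x†)‖ ‖x − x†‖^κ`. -/
theorem factorization_implies_cone_condition
    {𝕜 X Y : Type*} [RCLike 𝕜]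
    [NormedAddCommGroup X] [NormedSpace 𝕜 X] [CompleteSpace X]
    [NormedAddCommGroup Y] [NormedSpace 𝕜 Y] [CompleteSpace Y]
    (xdag : X) (ρ : ℝ) (hρ : 0 < ρ) (F : X → Y) (F' : X → (X →L[𝕜] Y))
    (hdiff : ∀ x ∈ Metric.closedBall xdag ρ, HasFDerivAt F (F' x) x)
    (CR κ : ℝ) (hCR : 0 < CR) (hκ : κ ∈ Set.Ioc (0:ℝ) 1)
    (hfac : ∀ x ∈ Metric.closedBall xdag ρ, ∀ xt ∈ Metric.closedBall xdag ρ,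
      ∃ R : Y →L[𝕜] Y, F' x = R ∘L F' xt ∧
        ‖R - ContinuousLinearMap.id 𝕜 Y‖ ≤ CR * ‖x - xt‖ ^ κ) :
    ∀ x ∈ Metric.closedBall xdag ρ,
      ‖F x - F xdag - F' xdag (x - xdag)‖ ≤
        (CR / (1 + κ)) * ‖F' xdag (x - xdag)‖ * ‖x - xdag‖ ^ κ :=
  factorization_implies_cone_condition_general xdag ρ F F' hdiff CR κ hκ hfac
end
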